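/- arXiv:2111.13476 — 13 statements merged into one kernel-verified Lean document; each statement's English description precedes it below -/
import Mathlib

section
/- Let U and U' be d-regular sets of a graph G (i.e., the induced subgraphs G[U] and G[U'] are d-regular) with d ≥ 1. If U \ U' = {u} and U' \ U = {v} (so |U \ U'| = |U' \ U| = 1), then the induced subgraphs G[U] and G[U'] are isomorphic, via the map fixing U ∩ U' and sending u to v. -/
/-- `U` is a `d`-regular set of `G`: every vertex of the induced subgraph `G[U]`
has degree exactly `d` within `U`. -/
def regSet {V : Type*} (G : SimpleGraph V) (d : ℕ) (U : Set V) : Prop :=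
  ∀ u ∈ U, {w ∈ U | G.Adj u w}.ncard = d

theorem stmt_0 {V : Type*} [Fintype V] [DecidableEq V] (G : SimpleGraph V) (d : ℕ)
    (hd : 1 ≤ d) (U U' : Set V) (hU : regSet G d U) (hU' : regSet G d U')
    (u v : V) (huv : U \ U' = {u}) (hvu : U' \ U = {v}) :
    ∃ φ : G.induce U ≃g G.induce U',
      (∀ x : U, (x : V) ≠ u → ((φ x : V) = (x : V))) ∧
      (∀ x : U, (x : V) = u → ((φ x : V) = v)) := by
  classical
  have hu : u ∈ U \ U' := by rw [huv]; exact rfl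
  have hv : v ∈ U' \ U := by rw [hvu]; exact rfl
  obtain ⟨huU, huU'⟩ := hu
  obtain ⟨hvU', hvU⟩ := hv
  have hsub : ∀ x ∈ U, x ≠ u → x ∈ U' := by
    intro x hx hne
    by_contra hx'
    exact hne (by have : x ∈ U \ U' := ⟨hx, hx'⟩; rwa [huv] at this)
  have hsub' : ∀ y ∈ U', y ≠ v → y ∈ U := by
    intro y hy hne
    by_contra hy'
    exact hne (by have : y ∈ U' \ U := ⟨hy, hy'⟩; rwa [hvu] at this)
  -- key degree lemma
  have key : ∀ w, w ∈ U → w ∈ U' → (G.Adj w u ↔ G.Adj w v) := by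
    intro w hw hw'
    have hA := hU w hw
    have hB := hU' w hw'
    set T : Set V := {x | x ∈ U ∧ x ∈ U' ∧ G.Adj w x} with hT
    have hTfin : T.Finite := Set.toFinite _
    have huT : u ∉ T := fun h => huU' h.2.1
    have hvT : v ∉ T := fun h => hvU h.1
    have hAeq : {x ∈ U | G.Adj w x} = if G.Adj w u then insert u T else T := by
      ext x
      by_cases hadj : G.Adj w u
      · simp only [if_pos hadj, Set.mem_insert_iff, Set.mem_setOf_eq, hT]
        constructor
        · rintro ⟨hx, hax⟩
          by_cases hx' : x = u
          · exact Or.inl hx'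
          · exact Or.inr ⟨hx, hsub x hx hx', hax⟩
        · rintro (rfl | ⟨h1, _, h3⟩)
          · exact ⟨huU, hadj⟩
          · exact ⟨h1, h3⟩
      · simp only [if_neg hadj, Set.mem_setOf_eq, hT]
        constructor
        · rintro ⟨hx, hax⟩
          have hx' : x ≠ u := fun h => hadj (h ▸ hax)
          exact ⟨hx, hsub x hx hx', hax⟩
        · rintro ⟨h1, _, h3⟩
          exact ⟨h1, h3⟩
    have hBeq : {x ∈ U' | G.Adj w x} = if G.Adj w v then insert v T else T := by
      ext x
      by_cases hadj : G.Adj w v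
      · simp only [if_pos hadj, Set.mem_insert_iff, Set.mem_setOf_eq, hT]
        constructor
        · rintro ⟨hx, hax⟩
          by_cases hx' : x = v
          · exact Or.inl hx'
          · exact Or.inr ⟨hsub' x hx hx', hx, hax⟩
        · rintro (rfl | ⟨_, h2, h3⟩)
          · exact ⟨hvU', hadj⟩
          · exact ⟨h2, h3⟩
      · simp only [if_neg hadj, Set.mem_setOf_eq, hT]
        constructor
        · rintro ⟨hx, hax⟩
          have hx' : x ≠ v := fun h => hadj (h ▸ hax)
          exact ⟨hsub' x hx hx', hx, hax⟩
        · rintro ⟨_, h2, h3⟩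
          exact ⟨h2, h3⟩
    rw [hAeq] at hA
    rw [hBeq] at hB
    constructor
    · intro h1
      by_contra h2
      rw [if_pos h1] at hA
      rw [if_neg h2] at hB
      rw [Set.ncard_insert_of_notMem huT hTfin] at hA
      omega
    · intro h1
      by_contra h2
      rw [if_pos h1] at hB
      rw [if_neg h2] at hA
      rw [Set.ncard_insert_of_notMem hvT hTfin] at hB
      omega
  -- the bijection
  have hne : u ≠ v := fun h => hvU (h ▸ huU)
  let f : U → U' := fun x => if h : (x : V) = u then ⟨v, hvU'⟩ else ⟨x, hsub x x.2 h⟩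
  let g : U' → U := fun y => if h : (y : V) = v then ⟨u, huU⟩ else ⟨y, hsub' y y.2 h⟩
  have hf_u : ∀ x : U, (x : V) = u → ((f x : V) = v) := by
    intro x hx; simp only [f, dif_pos hx]
  have hf_ne : ∀ x : U, (x : V) ≠ u → ((f x : V) = x) := by
    intro x hx; simp only [f, dif_neg hx]
  have hg_v : ∀ y : U', (y : V) = v → ((g y : V) = u) := by
    intro y hy; simp only [g, dif_pos hy]
  have hg_ne : ∀ y : U', (y : V) ≠ v → ((g y : V) = y) := by
    intro y hy; simp only [g, dif_neg hy]
  have hleft : Function.LeftInverse g f := by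
    intro x
    by_cases hx : (x : V) = u
    · apply Subtype.ext
      rw [hg_v (f x) (hf_u x hx), hx]
    · apply Subtype.ext
      have h1 := hf_ne x hx
      have h2 : (f x : V) ≠ v := by rw [h1]; exact fun h => hvU (h ▸ x.2)
      rw [hg_ne (f x) h2, h1]
  have hright : Function.RightInverse g f := by
    intro y
    by_cases hy : (y : V) = v
    · apply Subtype.ext
      rw [hf_u (g y) (hg_v y hy), hy]
    · apply Subtype.ext
      have h1 := hg_ne y hy
      have h2 : (g y : V) ≠ u := by rw [h1]; exact fun h => huU' (h ▸ y.2)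
      rw [hf_ne (g y) h2, h1]
  have hadj : ∀ x y : U, G.Adj (f x) (f y) ↔ G.Adj x y := by
    intro x y
    by_cases hx : (x : V) = u <;> by_cases hy : (y : V) = u
    · rw [hf_u x hx, hf_u y hy, hx, hy]
      simp
    · rw [hf_u x hx, hf_ne y hy, hx]
      have hyU' : (y : V) ∈ U' := hsub y y.2 hy
      have := key y y.2 hyU'
      constructor
      · intro h; exact (this.mpr h.symm).symm
      · intro h; exact (this.mp h.symm).symm
    · rw [hf_ne x hx, hf_u y hy, hy]
      exact (key x x.2 (hsub x x.2 hx)).symm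
    · rw [hf_ne x hx, hf_ne y hy]
  refine ⟨⟨⟨f, g, hleft, hright⟩, ?_⟩, hf_ne, hf_u⟩
  intro x y
  simp only [SimpleGraph.comap_adj, Function.Embedding.coe_subtype, Equiv.coe_fn_mk]
  exact hadj x y
end

section
/- Let U and U' be d-regular sets of a graph G with d ≥ 1, where U \ U' = {u} and U' \ U = {v}. Then U \ N[u] = U' \ N[v] and U ∩ N(u) = U' ∩ N(v), where N(x) denotes the open neighborhood and N[x] the closed neighborhood of x in G. -/
theorem stmt_1 {V : Type*} [Fintype V] [DecidableEq V] (G : SimpleGraph V) (d : ℕ)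
    (hd : 1 ≤ d) (U U' : Set V) (hU : regSet G d U) (hU' : regSet G d U')
    (u v : V) (huv : U \ U' = {u}) (hvu : U' \ U = {v}) :
    U \ (G.neighborSet u ∪ {u}) = U' \ (G.neighborSet v ∪ {v}) ∧
    U ∩ G.neighborSet u = U' ∩ G.neighborSet v := by
  classical
  have hu : u ∈ U ∧ u ∉ U' := (Set.ext_iff.mp huv u).mpr rfl
  have hv : v ∈ U' ∧ v ∉ U := (Set.ext_iff.mp hvu v).mpr rfl
  have key : ∀ w, w ∈ U → w ∈ U' → (G.Adj w u ↔ G.Adj w v) := by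
    intro w hwU hwU'
    have h1 : {x ∈ U | G.Adj w x}.ncard =
        {x ∈ U ∩ U' | G.Adj w x}.ncard + (if G.Adj w u then 1 else 0) := by
      have hdecomp : {x ∈ U | G.Adj w x} =
          {x ∈ U ∩ U' | G.Adj w x} ∪ {x ∈ U \ U' | G.Adj w x} := by
        ext x; by_cases hx : x ∈ U' <;> simp [hx] <;> tauto
      rw [hdecomp, Set.ncard_union_eq ?_ (Set.toFinite _) (Set.toFinite _)]
      · congr 1
        rw [huv]
        by_cases h : G.Adj w u
        · rw [if_pos h, Set.ncard_eq_one]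
          refine ⟨u, ?_⟩
          ext y
          constructor
          · rintro ⟨rfl, -⟩; rfl
          · rintro rfl; exact ⟨rfl, h⟩
        · rw [if_neg h]
          have : {x ∈ ({u} : Set V) | G.Adj w x} = ∅ := by
            ext y
            simp only [Set.mem_singleton_iff, Set.mem_setOf_eq, Set.mem_empty_iff_false, iff_false]
            rintro ⟨rfl, ha⟩; exact h ha
          rw [this, Set.ncard_empty]
      · rw [Set.disjoint_left]
        rintro x ⟨⟨-, hx2⟩, -⟩ ⟨⟨-, hx2'⟩, -⟩
        exact hx2' hx2
    have h2 : {x ∈ U' | G.Adj w x}.ncard =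
        {x ∈ U ∩ U' | G.Adj w x}.ncard + (if G.Adj w v then 1 else 0) := by
      have hdecomp : {x ∈ U' | G.Adj w x} =
          {x ∈ U ∩ U' | G.Adj w x} ∪ {x ∈ U' \ U | G.Adj w x} := by
        ext x; by_cases hx : x ∈ U <;> simp [hx] <;> tauto
      rw [hdecomp, Set.ncard_union_eq ?_ (Set.toFinite _) (Set.toFinite _)]
      · congr 1
        rw [hvu]
        by_cases h : G.Adj w v
        · rw [if_pos h, Set.ncard_eq_one]
          refine ⟨v, ?_⟩
          ext y
          constructor
          · rintro ⟨rfl, -⟩; rfl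
          · rintro rfl; exact ⟨rfl, h⟩
        · rw [if_neg h]
          have : {x ∈ ({v} : Set V) | G.Adj w x} = ∅ := by
            ext y
            simp only [Set.mem_singleton_iff, Set.mem_setOf_eq, Set.mem_empty_iff_false, iff_false]
            rintro ⟨rfl, ha⟩; exact h ha
          rw [this, Set.ncard_empty]
      · rw [Set.disjoint_left]
        rintro x ⟨⟨hx1, -⟩, -⟩ ⟨⟨-, hx2'⟩, -⟩
        exact hx2' hx1
    have e1 := hU w hwU
    have e2 := hU' w hwU'
    rw [h1] at e1
    rw [h2] at e2
    by_cases hA : G.Adj w u <;> by_cases hB : G.Adj w v <;>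
      simp [hA, hB] at e1 e2 ⊢ <;> omega
  have memU' : ∀ x, x ∈ U → x ≠ u → x ∈ U' := by
    intro x hx hne
    by_contra h
    exact hne ((Set.ext_iff.mp huv x).mp ⟨hx, h⟩)
  have memU : ∀ x, x ∈ U' → x ≠ v → x ∈ U := by
    intro x hx hne
    by_contra h
    exact hne ((Set.ext_iff.mp hvu x).mp ⟨hx, h⟩)
  constructor
  · ext x
    simp only [Set.mem_diff, Set.mem_union, Set.mem_singleton_iff,
      SimpleGraph.mem_neighborSet, not_or]
    constructor
    · rintro ⟨hxU, hx1, hx2⟩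
      have hxU' : x ∈ U' := memU' x hxU hx2
      refine ⟨hxU', ?_, ?_⟩
      · intro h
        exact hx1 (((key x hxU hxU').mpr h.symm).symm)
      · rintro rfl
        exact hv.2 hxU
    · rintro ⟨hxU', hx1, hx2⟩
      have hxU : x ∈ U := memU x hxU' hx2
      refine ⟨hxU, ?_, ?_⟩
      · intro h
        exact hx1 (((key x hxU hxU').mp h.symm).symm)
      · rintro rfl
        exact hu.2 hxU'
  · ext x
    simp only [Set.mem_inter_iff, SimpleGraph.mem_neighborSet]
    constructor
    · rintro ⟨hxU, hadj⟩
      have hne : x ≠ u := by rintro rfl; exact G.loopless.irrefl x hadj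
      have hxU' : x ∈ U' := memU' x hxU hne
      exact ⟨hxU', ((key x hxU hxU').mp hadj.symm).symm⟩
    · rintro ⟨hxU', hadj⟩
      have hne : x ≠ v := by rintro rfl; exact G.loopless.irrefl x hadj
      have hxU : x ∈ U := memU x hxU' hne
      exact ⟨hxU, ((key x hxU hxU').mpr hadj.symm).symm⟩
end

section
/- Let H be a graph of bandwidth at most b and suppose H is a t-sketch of a graph G. Then the bandwidth of G is at most t(b+1). -/
/-- `G` has bandwidth at most `k`: there is a linear layout of the vertices in which
the endpoints of every edge are at distance at most `k`. -/
def bandwidthLE {V : Type*} [Fintype V] (G : SimpleGraph V) (k : ℕ) : Prop :=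
  ∃ π : V ≃ Fin (Fintype.card V),
    ∀ u v, G.Adj u v → ((π u : ℤ) - (π v : ℤ)).natAbs ≤ k

/-- `H` is a `t`-sketch of `G` via the map `f`. -/
def IsSketch {VG VH : Type*} (G : SimpleGraph VG) (H : SimpleGraph VH) (t : ℕ)
    (f : VG → VH) : Prop :=
  (∀ v : VH, {u : VG | f u = v}.ncard ≤ t) ∧
  (∀ u v : VG, G.Adj u v → f u = f v ∨ H.Adj (f u) (f v))

theorem stmt_2 {VG VH : Type*} [Fintype VG] [Fintype VH]
    (G : SimpleGraph VG) (H : SimpleGraph VH) (b t : ℕ)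
    (hH : bandwidthLE H b) (f : VG → VH) (hf : IsSketch G H t f) :
    bandwidthLE G (t * (b + 1)) := by
  classical
  obtain ⟨σ, hσ⟩ := hH
  obtain ⟨hfib, hadj⟩ := hf
  set n := Fintype.card VG with hn
  let e : VG ≃ Fin n := Fintype.equivFin VG
  let key : VG → Fin (Fintype.card VH) ×ₗ Fin n := fun u => toLex (σ (f u), e u)
  have keyinj : Function.Injective key := by
    intro a c h
    have h2 := congrArg (fun p => (ofLex p).2) h
    simpa using e.injective h2
  letI : LinearOrder VG := LinearOrder.lift' key keyinj
  have hle : ∀ a c : VG, a ≤ c ↔ key a ≤ key c := fun a c => Iff.rfl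
  have hfst : ∀ a c : VG, a ≤ c → σ (f a) ≤ σ (f c) := by
    intro a c hac
    rw [hle] at hac
    rcases Prod.Lex.le_iff.1 hac with h | h
    · exact le_of_lt h
    · exact le_of_eq h.1
  let π' : Fin n ≃o VG := monoEquivOfFin VG hn.symm
  refine ⟨π'.toEquiv.symm, ?_⟩
  have main : ∀ u v : VG, G.Adj u v →
      ((π'.toEquiv.symm u : Fin n) : ℕ) ≤ ((π'.toEquiv.symm v : Fin n) : ℕ) →
      ((π'.toEquiv.symm v : Fin n) : ℕ) - ((π'.toEquiv.symm u : Fin n) : ℕ)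
        ≤ t * (b + 1) := by
    intro u v huv hij
    set i : Fin n := π'.toEquiv.symm u with hi
    set j : Fin n := π'.toEquiv.symm v with hj
    have hui : π' i = u := π'.apply_symm_apply u
    have hvj : π' j = v := π'.apply_symm_apply v
    have hijle : i ≤ j := hij
    -- all vertices with layout position in [i,j] have image key in [σ(f u), σ(f v)]
    have hmaps : ∀ x ∈ Finset.Icc i j,
        π' x ∈ Finset.univ.filter (fun w => σ (f w) ∈ Finset.Icc (σ (f u)) (σ (f v))) := by
      intro x hx
      rw [Finset.mem_Icc] at hx
      have h1 : u ≤ π' x := by rw [← hui]; exact π'.monotone hx.1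
      have h2 : π' x ≤ v := by rw [← hvj]; exact π'.monotone hx.2
      simp only [Finset.mem_filter, Finset.mem_univ, true_and, Finset.mem_Icc]
      exact ⟨hfst _ _ h1, hfst _ _ h2⟩
    have hinj : Set.InjOn (fun x => π' x) (Finset.Icc i j : Set (Fin n)) := by
      intro a _ c _ h
      exact π'.toEquiv.injective h
    have hcard1 : (Finset.Icc i j).card ≤
        (Finset.univ.filter
          (fun w => σ (f w) ∈ Finset.Icc (σ (f u)) (σ (f v)))).card :=
      Finset.card_le_card_of_injOn _ hmaps hinj
    -- the target set is covered by at most b+1 fibers, each of size ≤ t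
    have hsub : Finset.univ.filter
        (fun w => σ (f w) ∈ Finset.Icc (σ (f u)) (σ (f v))) ⊆
        (Finset.Icc (σ (f u)) (σ (f v))).biUnion
          (fun c => Finset.univ.filter (fun w => σ (f w) = c)) := by
      intro w hw
      simp only [Finset.mem_filter, Finset.mem_univ, true_and] at hw
      simp only [Finset.mem_biUnion]
      exact ⟨σ (f w), hw, by simp⟩
    have hfibcard : ∀ c : Fin (Fintype.card VH),
        (Finset.univ.filter (fun w => σ (f w) = c)).card ≤ t := by
      intro c
      have h1 : ((Finset.univ.filter (fun w : VG => σ (f w) = c)) : Set VG).ncard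
          ≤ t := by
        have hset : ((Finset.univ.filter (fun w : VG => σ (f w) = c)) : Set VG)
            = {w : VG | f w = σ.symm c} := by
          ext w
          simp [Equiv.eq_symm_apply, eq_comm]
        rw [hset]
        exact hfib (σ.symm c)
      rwa [Set.ncard_coe_finset] at h1
    have hcard2 : (Finset.univ.filter
        (fun w => σ (f w) ∈ Finset.Icc (σ (f u)) (σ (f v)))).card ≤
        (Finset.Icc (σ (f u)) (σ (f v))).card * t := by
      calc _ ≤ ((Finset.Icc (σ (f u)) (σ (f v))).biUnion
              (fun c => Finset.univ.filter (fun w => σ (f w) = c))).card :=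
            Finset.card_le_card hsub
        _ ≤ ∑ c ∈ Finset.Icc (σ (f u)) (σ (f v)),
              (Finset.univ.filter (fun w => σ (f w) = c)).card :=
            Finset.card_biUnion_le
        _ ≤ ∑ _c ∈ Finset.Icc (σ (f u)) (σ (f v)), t :=
            Finset.sum_le_sum (fun c _ => hfibcard c)
        _ = (Finset.Icc (σ (f u)) (σ (f v))).card * t := by
            rw [Finset.sum_const, smul_eq_mul]
    -- |Icc (σ(f u)) (σ(f v))| ≤ b+1
    have hgap : ((σ (f v)) : ℕ) ≤ ((σ (f u)) : ℕ) + b := by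
      rcases hadj u v huv with h | h
      · rw [h]; omega
      · have := hσ _ _ h
        omega
    have hIccH : (Finset.Icc (σ (f u)) (σ (f v))).card ≤ b + 1 := by
      rw [Fin.card_Icc]
      omega
    have hIccG : (Finset.Icc i j).card = (j : ℕ) + 1 - (i : ℕ) := Fin.card_Icc i j
    have : (j : ℕ) + 1 - (i : ℕ) ≤ (b + 1) * t := by
      rw [← hIccG]
      calc (Finset.Icc i j).card ≤ _ := hcard1
        _ ≤ _ := hcard2
        _ ≤ (b + 1) * t := Nat.mul_le_mul_right t hIccH
    have hmul : (b + 1) * t = t * (b + 1) := Nat.mul_comm _ _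
    omega
  intro u v huv
  rcases le_total ((π'.toEquiv.symm u : Fin n) : ℕ) ((π'.toEquiv.symm v : Fin n) : ℕ)
    with h | h
  · have := main u v huv h
    omega
  · have := main v u huv.symm h
    omega
end

section
/- Let G be a triangle-free graph, d ≥ 1, and let U and U' be d-regular sets of G. Then there is no token-sliding step from U to U'; that is, it is impossible that U \ U' = {u}, U' \ U = {v}, and {u,v} ∈ E(G). Consequently, any token-sliding sequence between two distinct d-regular sets with d ≥ 1 does not exist. -/
theorem stmt_3 {V : Type*} [Fintype V] [DecidableEq V] (G : SimpleGraph V)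
    (htf : G.CliqueFree 3) (d : ℕ) (hd : 1 ≤ d)
    (U U' : Set V) (hU : regSet G d U) (hU' : regSet G d U') :
    ¬ ∃ u v : V, U \ U' = {u} ∧ U' \ U = {v} ∧ G.Adj u v := by
  rintro ⟨u, v, huU, hvU, hadj⟩
  have htri : ∀ a b c : V, G.Adj a b → G.Adj b c → G.Adj a c → False := by
    intro a b c h1 h2 h3
    exact htf {a, b, c} (SimpleGraph.is3Clique_triple_iff.mpr ⟨h1, h3, h2⟩)
  have huMem : u ∈ U \ U' := huU ▸ rfl
  have hvMem : v ∈ U' \ U := hvU ▸ rfl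
  -- pick a neighbor w of u in U
  have hcard := hU u huMem.1
  have hne : {w ∈ U | G.Adj u w}.Nonempty := by
    rw [← Set.ncard_pos (Set.toFinite _)] at *
    omega
  obtain ⟨w, hwU, huw⟩ := hne
  -- w ∈ U', since w ≠ u
  have hwu : w ≠ u := fun h => G.irrefl (h ▸ huw)
  have hwU' : w ∈ U' := by
    by_contra h
    have : w ∈ U \ U' := ⟨hwU, h⟩
    rw [huU] at this
    exact hwu this
  -- neighbors of w in U' are all in U (none is v, by triangle-freeness)
  have hsub : insert u {z ∈ U' | G.Adj w z} ⊆ {z ∈ U | G.Adj w z} := by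
    rintro z (rfl | ⟨hzU', hwz⟩)
    · exact ⟨huMem.1, huw.symm⟩
    · refine ⟨?_, hwz⟩
      by_contra h
      have : z ∈ U' \ U := ⟨hzU', h⟩
      rw [hvU] at this
      subst this
      exact htri u w z huw hwz hadj
  have hucard := hU w hwU
  have hu'card := hU' w hwU'
  have hnotmem : u ∉ {z ∈ U' | G.Adj w z} := fun h => huMem.2 h.1
  have hle := Set.ncard_le_ncard hsub (Set.toFinite _)
  rw [Set.ncard_insert_of_notMem hnotmem (Set.toFinite _), hucard, hu'card] at hle
  omega
end

section
/- Let G be a triangle-free graph, d ≥ 1, and suppose U and U' are d-regular sets of G with U \ U' = {u} and U' \ U = {v} where u and v are adjacent in G. Then u and v have a common neighbor w in U ∩ U', yielding a triangle {u,v,w} in G — a contradiction. Hence in a triangle-free graph no adjacent token-slide between d-regular sets exists for d ≥ 1. -/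
theorem stmt_4 {V : Type*} [Fintype V] [DecidableEq V] (G : SimpleGraph V)
    (htf : G.CliqueFree 3) (d : ℕ) (hd : 1 ≤ d)
    (U U' : Set V) (hU : regSet G d U) (hU' : regSet G d U')
    (u v : V) (huv : U \ U' = {u}) (hvu : U' \ U = {v}) (hadj : G.Adj u v) :
    (∃ w, w ∈ U ∩ U' ∧ G.Adj u w ∧ G.Adj v w) ∧ False := by
  have hu : u ∈ U \ U' := huv ▸ rfl
  have hv : v ∈ U' \ U := hvu ▸ rfl
  -- u has d ≥ 1 neighbors inside U; pick one, w
  have hA : {w ∈ U | G.Adj u w}.ncard = d := hU u hu.1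
  have hAne : {w ∈ U | G.Adj u w}.Nonempty := by
    apply Set.nonempty_of_ncard_ne_zero
    omega
  obtain ⟨w, hwU, huw⟩ := hAne
  have hwne : w ≠ u := fun h => G.irrefl (h ▸ huw)
  have hwU' : w ∈ U' := by
    by_contra hwn
    have : w ∈ U \ U' := ⟨hwU, hwn⟩
    rw [huv] at this
    exact hwne this
  -- count w's neighbors
  have hBU : {x ∈ U | G.Adj w x}.ncard = d := hU w hwU
  have hBU' : {x ∈ U' | G.Adj w x}.ncard = d := hU' w hwU'
  set C : Set V := {x ∈ U ∩ U' | G.Adj w x} with hC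
  have hUdecomp : {x ∈ U | G.Adj w x} = insert u C := by
    ext x
    simp only [Set.mem_setOf_eq, Set.mem_insert_iff, hC, Set.mem_inter_iff]
    constructor
    · rintro ⟨hxU, hx⟩
      by_cases hxu : x = u
      · exact Or.inl hxu
      · right
        refine ⟨⟨hxU, ?_⟩, hx⟩
        by_contra hxn
        have : x ∈ U \ U' := ⟨hxU, hxn⟩
        rw [huv] at this
        exact hxu this
    · rintro (rfl | ⟨⟨h1, _⟩, h2⟩)
      · exact ⟨hu.1, huw.symm⟩
      · exact ⟨h1, h2⟩
  have huC : u ∉ C := fun h => hu.2 h.1.2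
  have hCfin : C.Finite := Set.toFinite _
  have hCcard : C.ncard = d - 1 := by
    have := hBU
    rw [hUdecomp, Set.ncard_insert_of_notMem huC hCfin] at this
    omega
  -- v must be adjacent to w
  have hvw : G.Adj w v := by
    by_contra hnv
    have hU'eq : {x ∈ U' | G.Adj w x} = C := by
      ext x
      simp only [Set.mem_setOf_eq, hC, Set.mem_inter_iff]
      constructor
      · rintro ⟨hxU', hx⟩
        refine ⟨⟨?_, hxU'⟩, hx⟩
        by_contra hxn
        have : x ∈ U' \ U := ⟨hxU', hxn⟩
        rw [hvu] at this
        exact hnv (this ▸ hx)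
      · rintro ⟨⟨_, h1⟩, h2⟩
        exact ⟨h1, h2⟩
    rw [hU'eq, hCcard] at hBU'
    omega
  exfalso
  exact htf {u, v, w} (SimpleGraph.is3Clique_triple_iff.mpr ⟨hadj, huw, hvw.symm⟩)
end

section
/- Let G be a graph, d ≥ 1, and let U be a d-regular set of G such that every connected component of G[U] is a clique on d+1 vertices. Let w, w' be true twins in G with w ∈ U and w' ∉ U, and let u be a vertex in the same component (clique) of G[U] as w with u ≠ w. Then U \ {u} ∪ {w'} is again a d-regular set of G, and every connected component of G[U \ {u} ∪ {w'}] is a clique on d+1 vertices. -/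
/-- Every connected component of `G[U]` is a clique on `d+1` vertices:
every vertex of `U` lies in a `(d+1)`-clique `C ⊆ U` that is closed under
adjacency within `U`. -/
def cliqueComponents {V : Type*} (G : SimpleGraph V) (d : ℕ) (U : Set V) : Prop :=
  ∀ u ∈ U, ∃ C : Set V, u ∈ C ∧ C ⊆ U ∧ C.ncard = d + 1 ∧ G.IsClique C ∧
    ∀ x ∈ C, ∀ y ∈ U, G.Adj x y → y ∈ C

/-- `w` and `w'` are true twins in `G`: distinct vertices with equal closed
neighborhoods. -/
def trueTwins {V : Type*} (G : SimpleGraph V) (w w' : V) : Prop :=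
  w ≠ w' ∧ G.neighborSet w ∪ {w} = G.neighborSet w' ∪ {w'}

theorem stmt_6 {V : Type*} [Fintype V] [DecidableEq V] (G : SimpleGraph V)
    (d : ℕ) (hd : 1 ≤ d) (U : Set V)
    (hreg : regSet G d U) (hcomp : cliqueComponents G d U)
    (w w' : V) (htw : trueTwins G w w') (hw : w ∈ U) (hw' : w' ∉ U)
    (u : V) (hu : u ≠ w)
    (C : Set V) (huC : u ∈ C) (hwC : w ∈ C) (hCU : C ⊆ U)
    (hCcard : C.ncard = d + 1) (hCclique : G.IsClique C)
    (hCclosed : ∀ x ∈ C, ∀ y ∈ U, G.Adj x y → y ∈ C) :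
    regSet G d (U \ {u} ∪ {w'}) ∧ cliqueComponents G d (U \ {u} ∪ {w'}) := by
  classical
  obtain ⟨hne, hNset⟩ := htw
  -- basic twin facts
  have hadjww' : G.Adj w w' := by
    have h : w' ∈ G.neighborSet w' ∪ {w'} := by simp
    rw [← hNset] at h
    rcases h with h | h
    · exact h
    · simp only [Set.mem_singleton_iff] at h
      exact absurd h.symm hne
  have hiff : ∀ x, x ≠ w → x ≠ w' → (G.Adj w x ↔ G.Adj w' x) := by
    intro x hxw hxw'
    constructor
    · intro h
      have h2 : x ∈ G.neighborSet w ∪ {w} := Or.inl h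
      rw [hNset] at h2
      rcases h2 with h2 | h2
      · exact h2
      · simp only [Set.mem_singleton_iff] at h2
        exact absurd h2 hxw'
    · intro h
      have h2 : x ∈ G.neighborSet w' ∪ {w'} := Or.inl h
      rw [← hNset] at h2
      rcases h2 with h2 | h2
      · exact h2
      · simp only [Set.mem_singleton_iff] at h2
        exact absurd h2 hxw
  have hw'C : w' ∉ C := fun h => hw' (hCU h)
  have huw' : u ≠ w' := fun h => hw' (h ▸ hCU huC)
  have hUne : ∀ x ∈ U, x ≠ w' := fun x hx h => hw' (h ▸ hx)
  -- w' is adjacent to everything in C except via w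
  have key1 : ∀ x ∈ C, x ≠ w → G.Adj w' x := by
    intro x hx hxw
    exact (hiff x hxw (hUne x (hCU hx))).mp
      (hCclique hwC hx (fun h => hxw h.symm))
  have key2 : ∀ y ∈ U, G.Adj w' y → y ∈ C := by
    intro y hy h
    by_cases hyw : y = w
    · exact hyw ▸ hwC
    · exact hCclosed w hwC y hy ((hiff y hyw (hUne y hy)).mpr h)
  have key4 : ∀ v ∈ U, v ∉ C → ∀ x ∈ C, ¬ G.Adj v x := by
    intro v hv hvC x hx h
    exact hvC (hCclosed x hx v hv h.symm)
  -- neighborhood formula for closed cliques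
  have nbhd_eq : ∀ (S T : Set V), S ⊆ T → G.IsClique S →
      (∀ x ∈ S, ∀ y ∈ T, G.Adj x y → y ∈ S) →
      ∀ z ∈ S, {y ∈ T | G.Adj z y} = S \ {z} := by
    intro S T hST hclq hcl z hz
    ext y
    simp only [Set.mem_setOf_eq, Set.mem_diff, Set.mem_singleton_iff]
    constructor
    · rintro ⟨hyT, hadj⟩
      exact ⟨hcl z hz y hyT hadj, fun h => G.irrefl (h ▸ hadj)⟩
    · rintro ⟨hyS, hyz⟩
      exact ⟨hST hyS, hclq hz hyS (fun h => hyz h.symm)⟩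
  -- disjointness of other components from C
  have disj : ∀ z ∈ U, z ∉ C → ∀ D : Set V, z ∈ D → D ⊆ U → D.ncard = d + 1 →
      (∀ x ∈ D, ∀ y ∈ U, G.Adj x y → y ∈ D) → ∀ t ∈ D, t ∉ C := by
    intro z hz hzC D hzD hDU hDcard hDcl t htD htC
    have hCD : C ⊆ D := by
      intro x hx
      by_cases hxt : x = t
      · exact hxt ▸ htD
      · exact hDcl t htD x (hCU hx) (hCclique htC hx (fun h => hxt h.symm))
    have hCeq : C = D :=
      Set.eq_of_subset_of_ncard_le hCD (by rw [hDcard, hCcard]) (Set.toFinite D)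
    exact hzC (hCeq ▸ hzD)
  -- the new clique
  set U' : Set V := U \ {u} ∪ {w'} with hU'
  set C' : Set V := C \ {u} ∪ {w'} with hC'
  have hC'U' : C' ⊆ U' := by
    intro x hx
    rcases hx with hx | hx
    · exact Or.inl ⟨hCU hx.1, hx.2⟩
    · exact Or.inr hx
  have hw'notCu : w' ∉ C \ {u} := fun h => hw'C h.1
  have hC'card : C'.ncard = d + 1 := by
    rw [hC', Set.union_singleton, Set.ncard_insert_of_notMem hw'notCu (Set.toFinite _),
      Set.ncard_diff_singleton_of_mem huC, hCcard]
    omega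
  have hC'clique : G.IsClique C' := by
    intro x hx y hy hxy
    rcases hx with hx | hx <;> rcases hy with hy | hy
    · exact hCclique hx.1 hy.1 hxy
    · simp only [Set.mem_singleton_iff] at hy
      subst hy
      by_cases hxw : x = w
      · exact hxw ▸ hadjww'
      · exact (key1 x hx.1 hxw).symm
    · simp only [Set.mem_singleton_iff] at hx
      subst hx
      by_cases hyw : y = w
      · exact hyw ▸ hadjww'.symm
      · exact key1 y hy.1 hyw
    · simp only [Set.mem_singleton_iff] at hx hy
      exact absurd (hx.trans hy.symm) hxy
  have hC'closed : ∀ x ∈ C', ∀ y ∈ U', G.Adj x y → y ∈ C' := by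
    intro x hx y hy hadj
    rcases hy with hy | hy
    · rcases hx with hx | hx
      · exact Or.inl ⟨hCclosed x hx.1 y hy.1 hadj, hy.2⟩
      · simp only [Set.mem_singleton_iff] at hx
        subst hx
        exact Or.inl ⟨key2 y hy.1 hadj, hy.2⟩
    · exact Or.inr hy
  have hw'U' : w' ∈ U' := Or.inr rfl
  -- neighborhoods outside C are unchanged
  have houtside : ∀ z ∈ U, z ∉ C → {y ∈ U' | G.Adj z y} = {y ∈ U | G.Adj z y} := by
    intro z hz hzC
    ext y
    simp only [Set.mem_setOf_eq]
    constructor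
    · rintro ⟨hy, hadj⟩
      rcases hy with hy | hy
      · exact ⟨hy.1, hadj⟩
      · simp only [Set.mem_singleton_iff] at hy
        subst hy
        exact absurd (key2 z hz hadj.symm) hzC
    · rintro ⟨hy, hadj⟩
      have hyu : y ≠ u := fun h => key4 z hz hzC u huC (h ▸ hadj)
      exact ⟨Or.inl ⟨hy, hyu⟩, hadj⟩
  constructor
  · -- regSet
    intro z hz
    rcases hz with hz | hz
    · by_cases hzC : z ∈ C
      · have hzC' : z ∈ C' := Or.inl ⟨hzC, hz.2⟩
        rw [nbhd_eq C' U' hC'U' hC'clique hC'closed z hzC',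
          Set.ncard_diff_singleton_of_mem hzC', hC'card]
        omega
      · rw [houtside z hz.1 hzC]
        exact hreg z hz.1
    · simp only [Set.mem_singleton_iff] at hz
      subst hz
      have hzC' : z ∈ C' := Or.inr rfl
      rw [nbhd_eq C' U' hC'U' hC'clique hC'closed z hzC',
        Set.ncard_diff_singleton_of_mem hzC', hC'card]
      omega
  · -- cliqueComponents
    intro z hz
    rcases hz with hz | hz
    · by_cases hzC : z ∈ C
      · exact ⟨C', Or.inl ⟨hzC, hz.2⟩, hC'U', hC'card, hC'clique, hC'closed⟩
      · obtain ⟨D, hzD, hDU, hDcard, hDclq, hDcl⟩ := hcomp z hz.1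
        have hDC : ∀ t ∈ D, t ∉ C := disj z hz.1 hzC D hzD hDU hDcard hDcl
        refine ⟨D, hzD, ?_, hDcard, hDclq, ?_⟩
        · intro x hx
          exact Or.inl ⟨hDU hx, fun h => hDC x hx (h ▸ huC)⟩
        · intro x hx y hy hadj
          rcases hy with hy | hy
          · exact hDcl x hx y hy.1 hadj
          · simp only [Set.mem_singleton_iff] at hy
            subst hy
            exact absurd (key2 x (hDU hx) hadj.symm) (hDC x hx)
    · simp only [Set.mem_singleton_iff] at hz
      subst hz
      exact ⟨C', Or.inr rfl, hC'U', hC'card, hC'clique, hC'closed⟩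
end

section
/- Let H be a graph and G its (d+1)-clique blow-up (each vertex v replaced by a (d+1)-clique X_v, with complete joins along edges of H). If U is a d-regular set of G of the form ⋃_{v∈I} X_v for an independent set I of H, and p, q are adjacent vertices of H with p ∈ I, q ∉ I, and I \ {p} ∪ {q} independent in H, then there is a token-sliding sequence of length d+1 in G from ⋃_{v∈I} X_v to ⋃_{v∈I\{p\}∪\{q\}} X_v in which every intermediate set is d-regular. -/
/-- The `(d+1)`-clique blow-up of `H`: each vertex `v` of `H` is replaced by the
clique `X_v = {v} × Fin (d+1)`, with a complete join between `X_u` and `X_v`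
whenever `u` and `v` are adjacent in `H`. -/
def blowup {W : Type*} (H : SimpleGraph W) (d : ℕ) : SimpleGraph (W × Fin (d + 1)) where
  Adj a b := (a.1 = b.1 ∧ a.2 ≠ b.2) ∨ H.Adj a.1 b.1
  symm := by
    constructor
    rintro a b (⟨h1, h2⟩ | h)
    · exact Or.inl ⟨h1.symm, fun h' => h2 h'.symm⟩
    · exact Or.inr h.symm
  loopless := by
    constructor
    rintro a (⟨_, h⟩ | h)
    · exact h rfl
    · exact H.loopless.irrefl _ h

lemma ncard_fin_lt {n : ℕ} (j : ℕ) (hj : j ≤ n) :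
    {i : Fin n | (i : ℕ) < j}.ncard = j := by
  have h : {i : Fin n | (i : ℕ) < j} = (fun i : Fin j => Fin.castLE hj i) '' Set.univ := by
    ext i
    simp only [Set.mem_setOf_eq, Set.image_univ, Set.mem_range]
    constructor
    · intro h; exact ⟨⟨i, h⟩, Fin.ext rfl⟩
    · rintro ⟨a, rfl⟩; exact a.2
  rw [h, Set.ncard_image_of_injective _ (Fin.castLE_injective hj), Set.ncard_univ]
  simp

lemma ncard_fin_ge {n : ℕ} (j : ℕ) (hj : j ≤ n) :
    {i : Fin n | j ≤ (i : ℕ)}.ncard = n - j := by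
  have h : {i : Fin n | j ≤ (i : ℕ)} = Set.univ \ {i : Fin n | (i : ℕ) < j} := by
    ext i; simp [not_lt]
  rw [h, Set.ncard_diff (Set.subset_univ _), ncard_fin_lt j hj, Set.ncard_univ]
  simp

lemma ncard_fin_ne {n : ℕ} (k : Fin n) :
    {i : Fin n | i ≠ k}.ncard = n - 1 := by
  have h : {i : Fin n | i ≠ k} = Set.univ \ {k} := by ext i; simp
  rw [h, Set.ncard_diff (Set.subset_univ _), Set.ncard_univ, Set.ncard_singleton]
  simp

lemma reg_Tslide {W : Type*} [Fintype W] [DecidableEq W] (H : SimpleGraph W)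
    (d : ℕ) (I : Set W)
    (hI : ∀ u ∈ I, ∀ v ∈ I, ¬ H.Adj u v)
    (p q : W) (hpq : H.Adj p q) (hp : p ∈ I) (hq : q ∉ I)
    (hI' : ∀ u ∈ I \ {p} ∪ {q}, ∀ v ∈ I \ {p} ∪ {q}, ¬ H.Adj u v)
    (j : ℕ) (hj : j ≤ d + 1) :
    regSet (blowup H d) d {x : W × Fin (d + 1) |
      (x.1 ∈ I ∧ x.1 ≠ p) ∨ (x.1 = p ∧ j ≤ (x.2 : ℕ)) ∨ (x.1 = q ∧ (x.2 : ℕ) < j)} := by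
  intro u hu
  have hpne : p ≠ q := hpq.ne
  set S : Set (W × Fin (d + 1)) := {x : W × Fin (d + 1) |
      (x.1 ∈ I ∧ x.1 ≠ p) ∨ (x.1 = p ∧ j ≤ (x.2 : ℕ)) ∨ (x.1 = q ∧ (x.2 : ℕ) < j)} with hS
  have injp : Function.Injective (fun i : Fin (d + 1) => ((p, i) : W × Fin (d + 1))) :=
    fun a b h => congrArg Prod.snd h
  have injq : Function.Injective (fun i : Fin (d + 1) => ((q, i) : W × Fin (d + 1))) :=
    fun a b h => congrArg Prod.snd h
  rcases hu with ⟨huI, hup⟩ | ⟨hup, huj⟩ | ⟨huq, huj⟩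
  · -- u.1 ∈ I, u.1 ≠ p
    have hset : {w ∈ S | (blowup H d).Adj u w} =
        (fun i => (u.1, i)) '' {i : Fin (d + 1) | i ≠ u.2} := by
      ext w
      constructor
      · rintro ⟨hwS, ⟨h1, h2⟩ | h⟩
        · exact ⟨w.2, fun h' => h2 h'.symm, Prod.ext h1 rfl⟩
        · exfalso
          rcases hwS with ⟨hwI, _⟩ | ⟨hwp, _⟩ | ⟨hwq, _⟩
          · exact hI u.1 huI w.1 hwI h
          · exact hI u.1 huI p hp (hwp ▸ h)
          · exact hI' u.1 (Or.inl ⟨huI, hup⟩) q (Or.inr rfl) (hwq ▸ h)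
      · rintro ⟨i, hi, rfl⟩
        exact ⟨Or.inl ⟨huI, hup⟩, Or.inl ⟨rfl, fun h => hi h.symm⟩⟩
    rw [hset, Set.ncard_image_of_injective _ (fun a b h => congrArg Prod.snd h),
      ncard_fin_ne]
    simp
  · -- u.1 = p, j ≤ u.2
    have hset : {w ∈ S | (blowup H d).Adj u w} =
        (fun i => (p, i)) '' {i : Fin (d + 1) | j ≤ (i : ℕ) ∧ i ≠ u.2} ∪
        (fun i => (q, i)) '' {i : Fin (d + 1) | (i : ℕ) < j} := by
      ext w
      constructor
      · rintro ⟨hwS, hadj⟩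
        rcases hwS with ⟨hwI, hwp⟩ | ⟨hwp, hwj⟩ | ⟨hwq, hwj⟩
        · exfalso
          rcases hadj with ⟨h1, _⟩ | h
          · exact hwp (h1 ▸ hup)
          · exact hI p hp w.1 hwI (by rwa [hup] at h)
        · rcases hadj with ⟨h1, h2⟩ | h
          · exact Or.inl ⟨w.2, ⟨hwj, fun h' => h2 h'.symm⟩, Prod.ext hwp.symm rfl⟩
          · exact absurd (by rwa [hup, hwp] at h) (H.loopless.irrefl p)
        · exact Or.inr ⟨w.2, hwj, Prod.ext hwq.symm rfl⟩
      · rintro (⟨i, ⟨hij, hik⟩, rfl⟩ | ⟨i, hij, rfl⟩)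
        · exact ⟨Or.inr (Or.inl ⟨rfl, hij⟩), Or.inl ⟨hup, fun h => hik h.symm⟩⟩
        · exact ⟨Or.inr (Or.inr ⟨rfl, hij⟩), Or.inr (by rw [hup]; exact hpq)⟩
    have hdisj : Disjoint ((fun i => (p, i)) '' {i : Fin (d + 1) | j ≤ (i : ℕ) ∧ i ≠ u.2})
        ((fun i => (q, i)) '' {i : Fin (d + 1) | (i : ℕ) < j}) := by
      rw [Set.disjoint_left]
      rintro x ⟨i, _, rfl⟩ ⟨i', _, h⟩
      exact hpne (congrArg Prod.fst h).symm
    have hmem : u.2 ∈ {i : Fin (d + 1) | j ≤ (i : ℕ)} := huj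
    have h1 : {i : Fin (d + 1) | j ≤ (i : ℕ) ∧ i ≠ u.2} =
        {i : Fin (d + 1) | j ≤ (i : ℕ)} \ {u.2} := by
      ext i; simp [Set.mem_diff]
    rw [hset, Set.ncard_union_eq hdisj (Set.toFinite _) (Set.toFinite _),
      Set.ncard_image_of_injective _ injp, Set.ncard_image_of_injective _ injq,
      h1, Set.ncard_diff_singleton_of_mem hmem, ncard_fin_ge j hj, ncard_fin_lt j hj]
    have := u.2.isLt
    omega
  · -- u.1 = q, u.2 < j
    have hset : {w ∈ S | (blowup H d).Adj u w} =
        (fun i => (q, i)) '' {i : Fin (d + 1) | (i : ℕ) < j ∧ i ≠ u.2} ∪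
        (fun i => (p, i)) '' {i : Fin (d + 1) | j ≤ (i : ℕ)} := by
      ext w
      constructor
      · rintro ⟨hwS, hadj⟩
        rcases hwS with ⟨hwI, hwp⟩ | ⟨hwp, hwj⟩ | ⟨hwq, hwj⟩
        · exfalso
          rcases hadj with ⟨h1, _⟩ | h
          · exact hq ((h1 ▸ huq) ▸ hwI)
          · exact hI' q (Or.inr rfl) w.1 (Or.inl ⟨hwI, hwp⟩) (by rwa [huq] at h)
        · exact Or.inr ⟨w.2, hwj, Prod.ext hwp.symm rfl⟩
        · rcases hadj with ⟨h1, h2⟩ | h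
          · exact Or.inl ⟨w.2, ⟨hwj, fun h' => h2 h'.symm⟩, Prod.ext hwq.symm rfl⟩
          · exact absurd (by rwa [huq, hwq] at h) (H.loopless.irrefl q)
      · rintro (⟨i, ⟨hij, hik⟩, rfl⟩ | ⟨i, hij, rfl⟩)
        · exact ⟨Or.inr (Or.inr ⟨rfl, hij⟩), Or.inl ⟨huq, fun h => hik h.symm⟩⟩
        · exact ⟨Or.inr (Or.inl ⟨rfl, hij⟩), Or.inr (by rw [huq]; exact hpq.symm)⟩
    have hdisj : Disjoint ((fun i => (q, i)) '' {i : Fin (d + 1) | (i : ℕ) < j ∧ i ≠ u.2})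
        ((fun i => (p, i)) '' {i : Fin (d + 1) | j ≤ (i : ℕ)}) := by
      rw [Set.disjoint_left]
      rintro x ⟨i, _, rfl⟩ ⟨i', _, h⟩
      exact hpne (congrArg Prod.fst h)
    have hmem : u.2 ∈ {i : Fin (d + 1) | (i : ℕ) < j} := huj
    have h1 : {i : Fin (d + 1) | (i : ℕ) < j ∧ i ≠ u.2} =
        {i : Fin (d + 1) | (i : ℕ) < j} \ {u.2} := by
      ext i; simp [Set.mem_diff]
    rw [hset, Set.ncard_union_eq hdisj (Set.toFinite _) (Set.toFinite _),
      Set.ncard_image_of_injective _ injq, Set.ncard_image_of_injective _ injp,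
      h1, Set.ncard_diff_singleton_of_mem hmem, ncard_fin_ge j hj, ncard_fin_lt j hj]
    omega
theorem stmt_8 {W : Type*} [Fintype W] [DecidableEq W] (H : SimpleGraph W)
    (d : ℕ) (hd : 1 ≤ d) (I : Set W)
    (hI : ∀ u ∈ I, ∀ v ∈ I, ¬ H.Adj u v)
    (p q : W) (hpq : H.Adj p q) (hp : p ∈ I) (hq : q ∉ I)
    (hI' : ∀ u ∈ I \ {p} ∪ {q}, ∀ v ∈ I \ {p} ∪ {q}, ¬ H.Adj u v) :
    ∃ T : ℕ → Set (W × Fin (d + 1)),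
      T 0 = {x : W × Fin (d + 1) | x.1 ∈ I} ∧
      T (d + 1) = {x : W × Fin (d + 1) | x.1 ∈ I \ {p} ∪ {q}} ∧
      (∀ j ≤ d + 1, regSet (blowup H d) d (T j)) ∧
      (∀ j < d + 1, ∃ a b : W × Fin (d + 1),
        T j \ T (j + 1) = {a} ∧ T (j + 1) \ T j = {b} ∧ (blowup H d).Adj a b) := by
  have hpne : p ≠ q := hpq.ne
  refine ⟨fun j => {x : W × Fin (d + 1) |
      (x.1 ∈ I ∧ x.1 ≠ p) ∨ (x.1 = p ∧ j ≤ (x.2 : ℕ)) ∨ (x.1 = q ∧ (x.2 : ℕ) < j)},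
    ?_, ?_, ?_, ?_⟩
  · ext x
    simp only [Set.mem_setOf_eq]
    constructor
    · rintro (⟨h, _⟩ | ⟨h, _⟩ | ⟨_, h⟩)
      · exact h
      · exact h ▸ hp
      · exact absurd h (Nat.not_lt_zero _)
    · intro h
      by_cases hxp : x.1 = p
      · exact Or.inr (Or.inl ⟨hxp, Nat.zero_le _⟩)
      · exact Or.inl ⟨h, hxp⟩
  · ext x
    simp only [Set.mem_setOf_eq, Set.mem_union, Set.mem_diff, Set.mem_singleton_iff]
    constructor
    · rintro (⟨h1, h2⟩ | ⟨h1, h2⟩ | ⟨h1, _⟩)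
      · exact Or.inl ⟨h1, h2⟩
      · exact absurd h2 (by have := x.2.isLt; omega)
      · exact Or.inr h1
    · rintro (⟨h1, h2⟩ | h)
      · exact Or.inl ⟨h1, h2⟩
      · exact Or.inr (Or.inr ⟨h, x.2.isLt⟩)
  · intro j hj
    exact reg_Tslide H d I hI p q hpq hp hq hI' j hj
  · intro j hjd
    refine ⟨(p, ⟨j, hjd⟩), (q, ⟨j, hjd⟩), ?_, ?_, Or.inr hpq⟩
    · ext x
      simp only [Set.mem_diff, Set.mem_setOf_eq, Set.mem_singleton_iff]
      constructor
      · rintro ⟨⟨h1, h2⟩ | ⟨h1, h2⟩ | ⟨h1, h2⟩, hout⟩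
        · exact absurd (Or.inl ⟨h1, h2⟩) hout
        · have hx2 : (x.2 : ℕ) = j := by
            by_contra hne
            exact hout (Or.inr (Or.inl ⟨h1, by omega⟩))
          exact Prod.ext h1 (Fin.ext hx2)
        · exact absurd (Or.inr (Or.inr ⟨h1, by omega⟩)) hout
      · rintro rfl
        refine ⟨Or.inr (Or.inl ⟨rfl, Nat.le_refl j⟩), ?_⟩
        rintro (⟨_, h2⟩ | ⟨_, h2⟩ | ⟨h1, _⟩)
        · exact h2 rfl
        · simp at h2
        · exact hpne h1
    · ext x
      simp only [Set.mem_diff, Set.mem_setOf_eq, Set.mem_singleton_iff]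
      constructor
      · rintro ⟨⟨h1, h2⟩ | ⟨h1, h2⟩ | ⟨h1, h2⟩, hout⟩
        · exact absurd (Or.inl ⟨h1, h2⟩) hout
        · exact absurd (Or.inr (Or.inl ⟨h1, by omega⟩)) hout
        · have hx2 : (x.2 : ℕ) = j := by
            by_contra hne
            exact hout (Or.inr (Or.inr ⟨h1, by omega⟩))
          exact Prod.ext h1 (Fin.ext hx2)
      · rintro rfl
        refine ⟨Or.inr (Or.inr ⟨rfl, Nat.lt_succ_self j⟩), ?_⟩
        rintro (⟨h1, _⟩ | ⟨h1, _⟩ | ⟨_, h2⟩)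
        · exact hq h1
        · exact hpne h1.symm
        · exact absurd h2 (by simp)
end

section
/- Every connected d-regular induced subgraph of a chordal graph is a complete graph (on d+1 vertices). -/
/-- A graph is chordal if every cycle of length at least 4 has a chord. -/
def IsChordal {V : Type*} (G : SimpleGraph V) : Prop :=
  ∀ (v : V) (c : G.Walk v v), c.IsCycle → 4 ≤ c.length →
    ∃ x y, x ∈ c.support ∧ y ∈ c.support ∧ G.Adj x y ∧ s(x, y) ∉ c.edges

open SimpleGraph Walk

set_option linter.unusedSectionVars false

section Base

variable {V : Type*} {G : SimpleGraph V}

/-- One step of a walk confined to `W`. -/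
def Stp (G : SimpleGraph V) (W : Set V) (x y : V) : Prop := y ∈ W ∧ G.Adj x y

/-- Reachability within `W`. -/
def Reach (G : SimpleGraph V) (W : Set V) (x y : V) : Prop :=
  Relation.ReflTransGen (Stp G W) x y

lemma Reach.mem_right {W : Set V} {x y : V} (h : Reach G W x y) (hx : x ∈ W) : y ∈ W := by
  induction h with
  | refl => exact hx
  | tail _ h ih => exact h.1

lemma Reach.mono {W W' : Set V} (hWW : W ⊆ W') {x y : V} (h : Reach G W x y) :
    Reach G W' x y := by
  induction h with
  | refl => exact .refl
  | tail _ h ih => exact ih.tail ⟨hWW h.1, h.2⟩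

lemma Reach.symm {W : Set V} {x y : V} (hx : x ∈ W) (h : Reach G W x y) : Reach G W y x := by
  induction h with
  | refl => exact .refl
  | tail hr h ih => exact Relation.ReflTransGen.head ⟨Reach.mem_right hr hx, h.2.symm⟩ ih

lemma reach_of_walk {W : Set V} {x y : V} (p : G.Walk x y) (hp : ∀ v ∈ p.support, v ∈ W) :
    ∀ z ∈ p.support, Reach G W x z := by
  induction p with
  | nil => intro z hz; rw [Walk.mem_support_nil_iff] at hz; subst hz; exact .refl
  | @cons a b c h q ih =>
    intro z hz
    rcases List.mem_cons.mp (by simpa [Walk.support_cons] using hz) with rfl | hz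
    · exact .refl
    · have hb : b ∈ W := hp b (by simp)
      have := ih (fun v hv => hp v (by simp [hv])) z hz
      exact Relation.ReflTransGen.head ⟨hb, h⟩ this

lemma walk_of_reach {W : Set V} {x y : V} (hx : x ∈ W) (h : Reach G W x y) :
    ∃ p : G.Walk x y, ∀ v ∈ p.support, v ∈ W := by
  induction h with
  | refl => exact ⟨Walk.nil, by simpa using hx⟩
  | @tail b c hr h ih =>
    obtain ⟨p, hp⟩ := ih
    refine ⟨p.concat h.2, ?_⟩
    intro v hv
    rw [Walk.support_concat, List.mem_append] at hv
    rcases hv with hv | hv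
    · exact hp v hv
    · simp at hv; subst hv; exact h.1

lemma Reach.restrict {W : Set V} {a x : V} (h : Reach G W a x) :
    Reach G {z | z ∈ W ∧ Reach G W a z} a x := by
  induction h with
  | refl => exact .refl
  | tail hr hstep ih => exact ih.tail ⟨⟨hstep.1, hr.tail hstep⟩, hstep.2⟩

section DE
variable [DecidableEq V]

lemma takeUntil_start {s t : V} (p : G.Walk s t) (hs : s ∈ p.support) :
    p.takeUntil s hs = Walk.nil := by
  cases p with
  | nil => rfl
  | cons h q => rw [Walk.takeUntil]; simp

lemma takeUntil_cons_ne {s b t x : V} (h : G.Adj s b) (q : G.Walk b t)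
    (hx : x ∈ (Walk.cons h q).support) (hne : s ≠ x) :
    (Walk.cons h q).takeUntil x hx =
      Walk.cons h (q.takeUntil x (by cases hx with
        | head => exact absurd rfl hne
        | tail _ h' => exact h')) := by
  rw [Walk.takeUntil]
  simp [hne]

/-- If `y` occurs strictly before `x` (i.e. in `takeUntil x`), then `x` does not occur in
`takeUntil y`. -/
lemma not_mem_takeUntil_of_mem_takeUntil {s t : V} (p : G.Walk s t) {x y : V}
    (hx : x ∈ p.support) (hy : y ∈ p.support) (hne : x ≠ y)
    (h : y ∈ (p.takeUntil x hx).support) : x ∉ (p.takeUntil y hy).support := by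
  induction p with
  | nil =>
    rw [Walk.mem_support_nil_iff] at hx hy
    exact absurd (hx.trans hy.symm) hne
  | @cons a b c hadj q ih =>
    by_cases hax : a = x
    · subst hax
      rw [takeUntil_start] at h
      simp at h
      exact absurd h.symm hne
    · rw [takeUntil_cons_ne hadj q hx hax] at h
      have hx' : x ∈ q.support := by
        cases hx with
        | head => exact absurd rfl hax
        | tail _ h' => exact h'
      rw [Walk.support_cons, List.mem_cons] at h
      rcases h with rfl | h
      · rw [takeUntil_start]
        simpa using hne
      · by_cases hay : a = y
        · subst hay
          rw [takeUntil_start]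
          simpa using fun h' => hax h'.symm
        · rw [takeUntil_cons_ne hadj q hy hay]
          have hy' : y ∈ q.support := by
            cases hy with
            | head => exact absurd rfl hay
            | tail _ h' => exact h'
          have := ih hx' hy' h
          rw [Walk.support_cons, List.mem_cons]
          rintro (rfl | hmem)
          · exact hax rfl
          · exact this hmem

lemma edges_of_length_one {x y : V} (w : G.Walk x y) (h : w.length = 1) :
    s(x, y) ∈ w.edges := by
  cases w with
  | nil => simp at h
  | cons hadj w' =>
    have h0 : w'.length = 0 := by simpa using h
    cases Walk.eq_of_length_eq_zero h0
    simp

lemma shortcut_aux {s t : V} (p : G.Walk s t) {x y : V} (hadj : G.Adj x y)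
    (hx : x ∈ p.support) (he : s(x, y) ∉ p.edges)
    (hyr : y ∈ (p.dropUntil x hx).support) :
    ∃ q : G.Walk s t, (∀ v ∈ q.support, v ∈ p.support) ∧ q.length < p.length := by
  set T := p.takeUntil x hx with hT
  set D := p.dropUntil x hx with hD
  set D2 := D.dropUntil y hyr with hD2
  refine ⟨T.append (Walk.cons hadj D2), ?_, ?_⟩
  · intro v hv
    rw [Walk.mem_support_append_iff] at hv
    rcases hv with hv | hv
    · exact Walk.support_takeUntil_subset p hx hv
    · rw [Walk.support_cons, List.mem_cons] at hv
      rcases hv with rfl | hv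
      · exact hx
      · exact Walk.support_dropUntil_subset p hx (Walk.support_dropUntil_subset D hyr hv)
  · have hsplit : p.length = T.length + D.length := by
      conv_lhs => rw [← Walk.take_spec p hx]
      rw [Walk.length_append]
    have hsplit2 : D.length = (D.takeUntil y hyr).length + D2.length := by
      conv_lhs => rw [← Walk.take_spec D hyr]
      rw [Walk.length_append]
    have h2 : 2 ≤ (D.takeUntil y hyr).length := by
      by_contra hlt
      interval_cases hl : (D.takeUntil y hyr).length
      · exact hadj.ne (Walk.eq_of_length_eq_zero hl)
      · exact he (Walk.edges_dropUntil_subset p hx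
          (Walk.edges_takeUntil_subset D hyr (edges_of_length_one _ hl)))
    rw [Walk.length_append, Walk.length_cons, hsplit, hsplit2]
    omega

lemma walk_support_split {s t x : V} (p : G.Walk s t) (hx : x ∈ p.support) :
    p.support = (p.takeUntil x hx).support ++ (p.dropUntil x hx).support.tail := by
  conv_lhs => rw [← Walk.take_spec p hx]
  rw [Walk.support_append]


lemma shortcut {s t : V} (p : G.Walk s t) {x y : V} (hadj : G.Adj x y)
    (hx : x ∈ p.support) (hy : y ∈ p.support) (he : s(x, y) ∉ p.edges) :
    ∃ q : G.Walk s t, (∀ v ∈ q.support, v ∈ p.support) ∧ q.length < p.length := by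
  by_cases hyr : y ∈ (p.dropUntil x hx).support
  · exact shortcut_aux p hadj hx he hyr
  · by_cases hxr : x ∈ (p.dropUntil y hy).support
    · exact shortcut_aux p hadj.symm hy (by rwa [Sym2.eq_swap]) hxr
    · exfalso
      have hyT : y ∈ (p.takeUntil x hx).support := by
        have h' := hy
        rw [walk_support_split p hx, List.mem_append] at h'
        rcases h' with h' | h'
        · exact h'
        · exact absurd (List.mem_of_mem_tail h') hyr
      have hxT : x ∈ (p.takeUntil y hy).support := by
        have h' := hx
        rw [walk_support_split p hy, List.mem_append] at h'
        rcases h' with h' | h'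
        · exact h'
        · exact absurd (List.mem_of_mem_tail h') hxr
      exact not_mem_takeUntil_of_mem_takeUntil p hx hy hadj.ne hyT hxT

/-- A minimal-length walk in `W` between nonadjacent distinct vertices is an induced path
of length at least 2. -/
lemma exists_min_path (W : Set V) {s t : V} (hst : s ≠ t) (hn : ¬ G.Adj s t)
    (h : ∃ p : G.Walk s t, ∀ v ∈ p.support, v ∈ W) :
    ∃ p : G.Walk s t, p.IsPath ∧ (∀ v ∈ p.support, v ∈ W) ∧ 2 ≤ p.length ∧
      ∀ x ∈ p.support, ∀ y ∈ p.support, G.Adj x y → s(x, y) ∈ p.edges := by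
  classical
  let P : ℕ → Prop := fun n => ∃ p : G.Walk s t, p.length = n ∧ ∀ v ∈ p.support, v ∈ W
  have hex : ∃ n, P n := by obtain ⟨p, hp⟩ := h; exact ⟨p.length, p, rfl, hp⟩
  obtain ⟨p0, hlen0, hmem0⟩ := Nat.find_spec hex
  have hminwalk : ∀ q : G.Walk s t, (∀ v ∈ q.support, v ∈ W) → p0.length ≤ q.length := by
    intro q hq
    rw [hlen0]
    exact Nat.find_min' hex ⟨q, rfl, hq⟩
  set p := p0.bypass with hp
  have hpm : ∀ v ∈ p.support, v ∈ W := fun v hv => hmem0 v (p0.support_bypass_subset hv)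
  have hmin : ∀ q : G.Walk s t, (∀ v ∈ q.support, v ∈ W) → p.length ≤ q.length := by
    intro q hq
    exact le_trans p0.length_bypass_le (hminwalk q hq)
  refine ⟨p, p0.bypass_isPath, hpm, ?_, ?_⟩
  · by_contra hlt
    interval_cases hl : p.length
    · exact hst (Walk.eq_of_length_eq_zero hl)
    · exact hn (p.adj_of_mem_edges (edges_of_length_one p hl))
  · intro x hx y hy hadj
    by_contra hne
    obtain ⟨q, hq1, hq2⟩ := shortcut p hadj hx hy hne
    exact absurd (hmin q (fun v hv => hpm v (hq1 v hv))) (by omega)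

end DE

/-- Gluing two induced paths with disjoint interiors into a chordless cycle
contradicts chordality. -/
lemma chordal_glue (hG : IsChordal G) {u w : V} (huw : u ≠ w) (hn : ¬ G.Adj u w)
    {p : G.Walk u w} {q : G.Walk w u} (hp : p.IsPath) (hq : q.IsPath)
    (hpl : 2 ≤ p.length) (hql : 2 ≤ q.length)
    (hpi : ∀ x ∈ p.support, ∀ y ∈ p.support, G.Adj x y → s(x, y) ∈ p.edges)
    (hqi : ∀ x ∈ q.support, ∀ y ∈ q.support, G.Adj x y → s(x, y) ∈ q.edges)
    (hsupp : ∀ z, z ∈ p.support → z ∈ q.support → z = u ∨ z = w)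
    (hcross : ∀ x y, x ∈ p.support → y ∈ q.support → x ∉ q.support → y ∉ p.support →
      ¬ G.Adj x y) : False := by
  set C : G.Walk u u := p.append q with hC
  have hlenC : C.length = p.length + q.length := Walk.length_append _ _
  have hCedges : C.edges = p.edges ++ q.edges := Walk.edges_append _ _
  have hCsupport : C.support = p.support ++ q.support.tail := Walk.support_append _ _
  have hedis : ∀ e, e ∈ p.edges → e ∈ q.edges → False := by
    intro e hep heq
    induction e with
    | h x y =>
      have hxy : G.Adj x y := p.adj_of_mem_edges hep
      have hxp : x ∈ p.support := p.fst_mem_support_of_mem_edges hep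
      have hyp : y ∈ p.support := p.snd_mem_support_of_mem_edges hep
      have hxq : x ∈ q.support := q.fst_mem_support_of_mem_edges heq
      have hyq : y ∈ q.support := q.snd_mem_support_of_mem_edges heq
      rcases hsupp x hxp hxq with rfl | rfl <;> rcases hsupp y hyp hyq with rfl | rfl
      · exact hxy.ne rfl
      · exact hn hxy
      · exact hn hxy.symm
      · exact hxy.ne rfl
  have hcyc : C.IsCycle := by
    refine ⟨⟨⟨?_⟩, ?_⟩, ?_⟩
    · rw [hCedges]
      exact List.Nodup.append hp.isTrail.edges_nodup hq.isTrail.edges_nodup hedis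
    · intro hnil
      rw [hnil] at hlenC
      simp at hlenC
      omega
    · have htl : C.support.tail = p.support.tail ++ q.support.tail := by
        rw [hCsupport, Walk.support_eq_cons p]
        simp
      rw [htl]
      refine List.Nodup.append ?_ ?_ ?_
      · exact List.Nodup.sublist (List.tail_sublist _) hp.support_nodup
      · exact List.Nodup.sublist (List.tail_sublist _) hq.support_nodup
      · intro z hzp hzq
        have hzp' : z ∈ p.support := List.mem_of_mem_tail hzp
        have hzq' : z ∈ q.support := List.mem_of_mem_tail hzq
        have hup : u ∉ p.support.tail := by
          have := hp.support_nodup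
          rw [Walk.support_eq_cons p] at this
          exact (List.nodup_cons.mp this).1
        have hwq : w ∉ q.support.tail := by
          have := hq.support_nodup
          rw [Walk.support_eq_cons q] at this
          exact (List.nodup_cons.mp this).1
        rcases hsupp z hzp' hzq' with rfl | rfl
        · exact hup hzp
        · exact hwq hzq
  obtain ⟨x, y, hx, hy, hadj, hne⟩ := hG u C hcyc (by omega)
  rw [hCsupport, List.mem_append] at hx hy
  have hx' : x ∈ p.support ∨ x ∈ q.support := hx.imp id List.mem_of_mem_tail
  have hy' : y ∈ p.support ∨ y ∈ q.support := hy.imp id List.mem_of_mem_tail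
  have hmemC : ∀ e, e ∈ p.edges ∨ e ∈ q.edges → e ∈ C.edges := by
    intro e he
    rw [hCedges, List.mem_append]
    exact he
  by_cases hxp : x ∈ p.support <;> by_cases hyp : y ∈ p.support
  · exact hne (hmemC _ (Or.inl (hpi x hxp y hyp hadj)))
  · have hyq : y ∈ q.support := hy'.resolve_left hyp
    by_cases hxq : x ∈ q.support
    · exact hne (hmemC _ (Or.inr (hqi x hxq y hyq hadj)))
    · exact hcross x y hxp hyq hxq hyp hadj
  · have hxq : x ∈ q.support := hx'.resolve_left hxp
    by_cases hyq : y ∈ q.support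
    · exact hne (hmemC _ (Or.inr (hqi x hxq y hyq hadj)))
    · exact hcross y x hyp hxq hyq hxp hadj.symm
  · have hxq : x ∈ q.support := hx'.resolve_left hxp
    have hyq : y ∈ q.support := hy'.resolve_left hyp
    exact hne (hmemC _ (Or.inr (hqi x hxq y hyq hadj)))

end Base

section Dirac
variable {V : Type*} {G : SimpleGraph V}

/-- `v` is simplicial within `W`. -/
def SimpIn (G : SimpleGraph V) (W : Set V) (v : V) : Prop :=
  v ∈ W ∧ ∀ x ∈ W, ∀ y ∈ W, G.Adj v x → G.Adj v y → x ≠ y → G.Adj x y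

theorem dirac_pair (hG : IsChordal G) :
    ∀ (n : ℕ) (W : Set V), W.Finite → W.ncard = n → W.Nonempty →
      (∀ x ∈ W, ∀ y ∈ W, x ≠ y → G.Adj x y) ∨
      ∃ v w, SimpIn G W v ∧ SimpIn G W w ∧ v ≠ w ∧ ¬ G.Adj v w := by
  intro n
  induction n using Nat.strong_induction_on with
  | _ n ih =>
  intro W hWfin hcard hWne
  by_cases hcomp : ∀ x ∈ W, ∀ y ∈ W, x ≠ y → G.Adj x y
  · exact Or.inl hcomp
  right
  push_neg at hcomp
  obtain ⟨a, ha, b, hb, hab, hnadj⟩ := hcomp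
  classical
  set SepP : Set V → Prop := fun S => S ⊆ W \ {a, b} ∧ ¬ Reach G (W \ S) a b with hSepP
  have hsep0 : SepP (W \ {a, b}) := by
    refine ⟨subset_rfl, fun hr => ?_⟩
    have hsub : W \ (W \ {a, b}) ⊆ {a, b} := by
      intro z hz
      by_contra hzc
      exact hz.2 ⟨hz.1, hzc⟩
    have hr' : Reach G {a, b} a b := hr.mono hsub
    have hkey : ∀ z, Reach G ({a, b} : Set V) a z → z = a := by
      intro z hz
      induction hz with
      | refl => rfl
      | tail hr hstep ih2 =>
        rcases hstep with ⟨hzmem, hadj⟩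
        rw [ih2] at hadj
        rcases hzmem with rfl | hzb
        · exact absurd hadj (G.loopless.irrefl _)
        · rw [Set.mem_singleton_iff] at hzb
          subst hzb
          exact absurd hadj hnadj
    exact hab (hkey b hr').symm
  let Pn : ℕ → Prop := fun m => ∃ S, SepP S ∧ S.ncard = m
  have hex : ∃ m, Pn m := ⟨_, _, hsep0, rfl⟩
  obtain ⟨S, hS, hScard⟩ := Nat.find_spec hex
  have hSmin : ∀ T, SepP T → S.ncard ≤ T.ncard := by
    intro T hT
    rw [hScard]
    exact Nat.find_min' hex ⟨T, hT, rfl⟩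
  have hSW : S ⊆ W \ {a, b} := hS.1
  have hSW' : S ⊆ W := hSW.trans Set.diff_subset
  have hSfin : S.Finite := hWfin.subset hSW'
  set Cmp : V → Set V := fun c => {x | x ∈ W \ S ∧ Reach G (W \ S) c x} with hCmp
  have haW : a ∈ W \ S := ⟨ha, fun h => (hSW h).2 (by simp)⟩
  have hbW : b ∈ W \ S := ⟨hb, fun h => (hSW h).2 (by simp)⟩
  have hmemCmp : ∀ c, c ∈ W \ S → c ∈ Cmp c := fun c hc => ⟨hc, .refl⟩
  have hclosed : ∀ c, ∀ x ∈ Cmp c, ∀ y, G.Adj x y → y ∈ W \ S → y ∈ Cmp c :=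
    fun c x hx y hxy hy => ⟨hy, hx.2.tail ⟨hy, hxy⟩⟩
  have hAB : ∀ z, z ∈ Cmp a → z ∈ Cmp b → False := by
    intro z hzA hzB
    exact hS.2 (hzA.2.trans (Reach.symm hbW hzB.2))
  -- every separator vertex has a neighbor in each of the two components
  have hnbr : ∀ c ∈ ({a, b} : Set V), ∀ s' ∈ S, ∃ x ∈ Cmp c, G.Adj s' x := by
    intro c hc s' hs'
    have hcW : c ∈ W \ S := by
      rcases hc with rfl | hc
      · exact haW
      · rw [Set.mem_singleton_iff] at hc; subst hc; exact hbW
    by_contra hno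
    push_neg at hno
    have hS' : SepP (S \ {s'}) := by
      refine ⟨Set.diff_subset.trans hSW, fun hr => ?_⟩
      have hclaim : ∀ z, Reach G (W \ (S \ {s'})) c z → z ∈ Cmp c := by
        intro z hz
        induction hz with
        | refl => exact hmemCmp c hcW
        | @tail m z hr hstep ih2 =>
          rcases hstep with ⟨hzmem, hadj⟩
          by_cases hzs : z = s'
          · subst hzs
            exact absurd hadj.symm (hno m ih2)
          · have hzWS : z ∈ W \ S := ⟨hzmem.1, fun hzS => hzmem.2 ⟨hzS, hzs⟩⟩
            exact hclosed c m ih2 z hadj hzWS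
      -- derive Reach (W\S) a b
      rcases hc with rfl | hc
      · -- c = a : from hr : Reach (W \ (S\{s'})) a b
        exact hAB b (hclaim b hr) (hmemCmp b hbW)
      · rw [Set.mem_singleton_iff] at hc
        have haW' : a ∈ W \ (S \ {s'}) := ⟨ha, fun h => haW.2 h.1⟩
        have hr' : Reach G (W \ (S \ {s'})) c a := by
          rw [hc]; exact Reach.symm haW' hr
        have hmem : a ∈ Cmp c := hclaim a hr'
        rw [hc] at hmem
        exact hAB a (hmemCmp a haW) hmem
    have h1 : S.ncard ≤ (S \ {s'}).ncard := hSmin _ hS'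
    have h2 : (S \ {s'}).ncard < S.ncard := Set.ncard_diff_singleton_lt_of_mem hs' hSfin
    omega
  -- S is a clique
  have hSclique : ∀ x ∈ S, ∀ y ∈ S, x ≠ y → G.Adj x y := by
    intro u hu w hw huw
    by_contra hnuw
    obtain ⟨a1, ha1, ha1adj⟩ := hnbr a (by simp) u hu
    obtain ⟨a2, ha2, ha2adj⟩ := hnbr a (by simp) w hw
    obtain ⟨b1, hb1, hb1adj⟩ := hnbr b (by simp) u hu
    obtain ⟨b2, hb2, hb2adj⟩ := hnbr b (by simp) w hw
    have hwalkside : ∀ c ∈ ({a, b} : Set V), ∀ x1 ∈ Cmp c, ∀ x2 ∈ Cmp c,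
        G.Adj u x1 → G.Adj w x2 →
        ∃ p : G.Walk u w, ∀ v ∈ p.support, v ∈ Cmp c ∪ {u, w} := by
      intro c hc x1 hx1 x2 hx2 hadj1 hadj2
      have h1 : Reach G (Cmp c) c x1 := hx1.2.restrict
      have h2 : Reach G (Cmp c) c x2 := hx2.2.restrict
      have hcC : c ∈ Cmp c := by
        rcases hc with hc | hc
        · rw [hc]; exact hmemCmp a haW
        · rw [Set.mem_singleton_iff] at hc; rw [hc]; exact hmemCmp b hbW
      have h3 : Reach G (Cmp c) x1 x2 := (Reach.symm hcC h1).trans h2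
      obtain ⟨p0, hp0⟩ := walk_of_reach hx1 h3
      refine ⟨Walk.cons hadj1 (p0.concat hadj2.symm), ?_⟩
      intro v hv
      rw [Walk.support_cons, List.mem_cons] at hv
      rcases hv with rfl | hv
      · right; simp
      · rw [Walk.support_concat, List.mem_append] at hv
        rcases hv with hv | hv
        · exact Or.inl (hp0 v hv)
        · simp at hv; subst hv; right; simp
    obtain ⟨pA, hpA⟩ := hwalkside a (by simp) a1 ha1 a2 ha2 ha1adj ha2adj
    obtain ⟨pB, hpB⟩ := hwalkside b (by simp) b1 hb1 b2 hb2 hb1adj hb2adj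
    obtain ⟨P, hPpath, hPmem, hPlen, hPind⟩ :=
      exists_min_path (Cmp a ∪ {u, w}) huw hnuw ⟨pA, hpA⟩
    have hnwu : ¬ G.Adj w u := fun h => hnuw h.symm
    obtain ⟨Q0, hQpath, hQmem, hQlen, hQind⟩ :=
      exists_min_path (Cmp b ∪ {u, w}) (Ne.symm huw) hnwu ⟨pB.reverse, by
        intro v hv; rw [Walk.support_reverse, List.mem_reverse] at hv; exact hpB v hv⟩
    -- classify support membership
    have hPA : ∀ z ∈ P.support, z ∉ ({u, w} : Set V) → z ∈ Cmp a := by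
      intro z hz hzuw
      rcases hPmem z hz with h | h
      · exact h
      · exact absurd h hzuw
    have hQB : ∀ z ∈ Q0.support, z ∉ ({u, w} : Set V) → z ∈ Cmp b := by
      intro z hz hzuw
      rcases hQmem z hz with h | h
      · exact h
      · exact absurd h hzuw
    refine chordal_glue hG huw hnuw hPpath hQpath hPlen hQlen hPind hQind ?_ ?_
    · intro z hzp hzq
      by_contra hzc
      push_neg at hzc
      have hzuw : z ∉ ({u, w} : Set V) := by
        intro h
        rcases h with rfl | h
        · exact hzc.1 rfl
        · rw [Set.mem_singleton_iff] at h; exact hzc.2 h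
      exact hAB z (hPA z hzp hzuw) (hQB z hzq hzuw)
    · intro x y hxP hyQ hxQ hyP hadj
      have hxuw : x ∉ ({u, w} : Set V) := by
        intro h
        rcases h with rfl | h
        · exact hxQ Q0.end_mem_support
        · rw [Set.mem_singleton_iff] at h; subst h; exact hxQ Q0.start_mem_support
      have hyuw : y ∉ ({u, w} : Set V) := by
        intro h
        rcases h with rfl | h
        · exact hyP P.start_mem_support
        · rw [Set.mem_singleton_iff] at h; subst h; exact hyP P.end_mem_support
      have hxA : x ∈ Cmp a := hPA x hxP hxuw
      have hyB : y ∈ Cmp b := hQB y hyQ hyuw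
      exact hAB y (hclosed a x hxA y hadj hyB.1) hyB
  -- a simplicial vertex inside each component
  have hside : ∀ c ∈ W \ S, (∃ z ∈ W, z ∉ Cmp c ∪ S) → ∃ v ∈ Cmp c, SimpIn G W v := by
    intro c hcW ⟨z, hzW, hzC⟩
    have hCS_sub : Cmp c ∪ S ⊆ W := by
      intro x hx
      rcases hx with hx | hx
      · exact hx.1.1
      · exact hSW' hx
    have hss : Cmp c ∪ S ⊂ W := ⟨hCS_sub, fun h => hzC (h hzW)⟩
    have hlt : (Cmp c ∪ S).ncard < n := hcard ▸ Set.ncard_lt_ncard hss hWfin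
    have hne' : (Cmp c ∪ S).Nonempty := ⟨c, Or.inl (hmemCmp c hcW)⟩
    have hnbrsub : ∀ v ∈ Cmp c, ∀ y ∈ W, G.Adj v y → y ∈ Cmp c ∪ S := by
      intro v hv y hyW hadj
      by_cases hyS : y ∈ S
      · exact Or.inr hyS
      · exact Or.inl (hclosed c v hv y hadj ⟨hyW, hyS⟩)
    rcases ih _ hlt (Cmp c ∪ S) (hWfin.subset hCS_sub) rfl hne' with hfull | ⟨v, v', hv, hv', hvv', hnvv'⟩
    · refine ⟨c, hmemCmp c hcW, hcW.1, ?_⟩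
      intro x hx y hy hax hay hxy
      exact hfull x (hnbrsub c (hmemCmp c hcW) x hx hax) y (hnbrsub c (hmemCmp c hcW) y hy hay) hxy
    · have hpick : ∃ v0, v0 ∈ Cmp c ∧ SimpIn G (Cmp c ∪ S) v0 := by
        by_cases hvS : v ∈ S
        · by_cases hv'S : v' ∈ S
          · exact absurd (hSclique v hvS v' hv'S hvv') hnvv'
          · exact ⟨v', hv'.1.resolve_right hv'S, hv'⟩
        · exact ⟨v, hv.1.resolve_right hvS, hv⟩
      obtain ⟨v0, hv0C, hv0simp⟩ := hpick
      refine ⟨v0, hv0C, hv0C.1.1, ?_⟩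
      intro x hx y hy hax hay hxy
      exact hv0simp.2 x (hnbrsub v0 hv0C x hx hax) y (hnbrsub v0 hv0C y hy hay) hax hay hxy
  obtain ⟨vA, hvA, hvAsimp⟩ := hside a haW ⟨b, hb, by
    rintro (h | h)
    · exact hAB b h (hmemCmp b hbW)
    · exact (hSW h).2 (by simp)⟩
  obtain ⟨vB, hvB, hvBsimp⟩ := hside b hbW ⟨a, ha, by
    rintro (h | h)
    · exact hAB a (hmemCmp a haW) h
    · exact (hSW h).2 (by simp)⟩
  refine ⟨vA, vB, hvAsimp, hvBsimp, ?_, ?_⟩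
  · rintro rfl
    exact hAB vA hvA hvB
  · intro hadj
    exact hAB vB (hclosed a vA hvA vB hadj hvB.1) hvB

end Dirac

theorem stmt_10 {V : Type*} [Fintype V] (G : SimpleGraph V) (hG : IsChordal G)
    (d : ℕ) (U : Set V) (hreg : regSet G d U) (hconn : (G.induce U).Connected) :
    G.IsClique U ∧ U.ncard = d + 1 := by
  classical
  have hUne : U.Nonempty := by
    obtain ⟨⟨v, hv⟩⟩ := hconn.nonempty
    exact ⟨v, hv⟩
  have hUfin : U.Finite := Set.toFinite U
  obtain ⟨v, hvU, hvsimp⟩ : ∃ v, v ∈ U ∧ ∀ x ∈ U, ∀ y ∈ U,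
      G.Adj v x → G.Adj v y → x ≠ y → G.Adj x y := by
    rcases dirac_pair hG U.ncard U hUfin rfl hUne with hcomp | ⟨v, _, hv, _, _, _⟩
    · obtain ⟨x, hx⟩ := hUne
      exact ⟨x, hx, fun y hy z hz _ _ hyz => hcomp y hy z hz hyz⟩
    · exact ⟨v, hv.1, hv.2⟩
  set Nv := {w ∈ U | G.Adj v w} with hNv
  have hNvcard : Nv.ncard = d := hreg v hvU
  have hNvfin : Nv.Finite := hUfin.subset (fun x hx => hx.1)
  have hvNv : v ∉ Nv := fun h => G.loopless.irrefl v h.2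
  set K := insert v Nv with hK
  have hKfin : K.Finite := hNvfin.insert v
  have hKcard : K.ncard = d + 1 := by
    rw [hK, Set.ncard_insert_of_notMem hvNv hNvfin, hNvcard]
  have hKU : K ⊆ U := by
    intro x hx
    rcases Set.mem_insert_iff.mp hx with rfl | hx
    · exact hvU
    · exact hx.1
  have hKpair : ∀ x ∈ K, ∀ y ∈ K, x ≠ y → G.Adj x y := by
    intro x hx y hy hxy
    rcases Set.mem_insert_iff.mp hx with rfl | hx <;>
      rcases Set.mem_insert_iff.mp hy with rfl | hy
    · exact absurd rfl hxy
    · exact hy.2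
    · exact hx.2.symm
    · exact hvsimp x hx.1 y hy.1 hx.2 hy.2 hxy
  have hclosed : ∀ x ∈ K, ∀ y ∈ U, G.Adj x y → y ∈ K := by
    intro x hx y hyU hadj
    rcases Set.mem_insert_iff.mp hx with rfl | hx
    · exact Set.mem_insert_of_mem _ ⟨hyU, hadj⟩
    · have hsub : K \ {x} ⊆ {w ∈ U | G.Adj x w} := by
        intro z hz
        rcases Set.mem_insert_iff.mp hz.1 with rfl | hzNv
        · exact ⟨hvU, hx.2.symm⟩
        · have hxz : x ≠ z := fun he => hz.2 he.symm
          exact ⟨hzNv.1, hvsimp x hx.1 z hzNv.1 hx.2 hzNv.2 hxz⟩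
      have hxK : x ∈ K := Set.mem_insert_of_mem _ hx
      have hcard2 : (K \ {x}).ncard = d := by
        rw [Set.ncard_diff_singleton_of_mem hxK, hKcard]
        omega
      have heq : K \ {x} = {w ∈ U | G.Adj x w} :=
        Set.eq_of_subset_of_ncard_le hsub
          (by rw [hreg x hx.1, hcard2]) (hUfin.subset fun z hz => hz.1)
      have hmem : y ∈ K \ {x} := by rw [heq]; exact ⟨hyU, hadj⟩
      exact hmem.1
  have hUK : U ⊆ K := by
    intro w hwU
    obtain ⟨p⟩ := hconn.preconnected ⟨v, hvU⟩ ⟨w, hwU⟩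
    have claim : ∀ (x y : ↥U) (q : (G.induce U).Walk x y), (x : V) ∈ K → (y : V) ∈ K := by
      intro x y q
      induction q with
      | nil => intro h; exact h
      | cons hadj q ih =>
        intro hx
        rename_i x' y' _
        have hadj' : G.Adj (x' : V) (y' : V) := hadj
        exact ih (hclosed _ hx _ y'.2 hadj')
    exact claim ⟨v, hvU⟩ ⟨w, hwU⟩ p (Set.mem_insert _ _)
  have hUeq : U = K := Set.Subset.antisymm hUK hKU
  constructor
  · intro x hx y hy hxy
    exact hKpair x (hUeq ▸ hx) y (hUeq ▸ hy) hxy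
  · rw [hUeq, hKcard]
end

section
/- Let H be a bipartite graph with bipartition (A,B), let G be obtained from H by attaching a pendant vertex v' to each v ∈ V(H), and let U be a 1-regular set of G of size 2k. Define R = {v ∈ V(H) : {v,v'} ⊆ U} ∪ {u ∈ A : ∃v, {u,v} ⊆ U and {u,v} ∈ E(H)}. Then R is an independent set of H of size k (i.e., |R| = |U|/2). -/
/-- The graph obtained from `H` by attaching a pendant vertex `Sum.inr v` to
every vertex `Sum.inl v` of `H`. -/
def pendant {W : Type*} (H : SimpleGraph W) : SimpleGraph (W ⊕ W) where
  Adj a b := match a, b with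
    | .inl u, .inl v => H.Adj u v
    | .inl u, .inr v => u = v
    | .inr u, .inl v => u = v
    | .inr _, .inr _ => False
  symm := by
    constructor
    rintro (u | u) (v | v) h
    · exact H.adj_symm h
    · exact h.symm
    · exact h.symm
    · exact h.elim
  loopless := by
    constructor
    rintro (u | u) h
    · exact H.irrefl h
    · exact h


theorem stmt_14 {W : Type*} [Fintype W] [DecidableEq W] (H : SimpleGraph W)
    (A B : Set W) (hpart : A ∪ B = Set.univ) (hdisj : Disjoint A B)
    (hA : ∀ u ∈ A, ∀ v ∈ A, ¬ H.Adj u v) (hB : ∀ u ∈ B, ∀ v ∈ B, ¬ H.Adj u v)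
    (U : Set (W ⊕ W)) (hreg : regSet (pendant H) 1 U)
    (k : ℕ) (hcard : U.ncard = 2 * k)
    (R : Set W)
    (hR : R = {v : W | Sum.inl v ∈ U ∧ Sum.inr v ∈ U} ∪
      {u ∈ A | ∃ v : W, Sum.inl u ∈ U ∧ Sum.inl v ∈ U ∧ H.Adj u v}) :
    (∀ u ∈ R, ∀ v ∈ R, ¬ H.Adj u v) ∧ R.ncard = k := by
  classical
  -- unique neighbour facts
  have huniq : ∀ x ∈ U, ∀ y z, y ∈ U → z ∈ U → (pendant H).Adj x y →
      (pendant H).Adj x z → y = z := by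
    intro x hx y z hy hz hxy hxz
    obtain ⟨a, ha⟩ := Set.ncard_eq_one.mp (hreg x hx)
    have h1 : y ∈ ({a} : Set (W ⊕ W)) := ha ▸ (⟨hy, hxy⟩ : y ∈ {w ∈ U | (pendant H).Adj x w})
    have h2 : z ∈ ({a} : Set (W ⊕ W)) := ha ▸ (⟨hz, hxz⟩ : z ∈ {w ∈ U | (pendant H).Adj x w})
    simp only [Set.mem_singleton_iff] at h1 h2
    rw [h1, h2]
  have hex : ∀ x ∈ U, ∃ y ∈ U, (pendant H).Adj x y := by
    intro x hx
    obtain ⟨a, ha⟩ := Set.ncard_eq_one.mp (hreg x hx)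
    have : a ∈ {w ∈ U | (pendant H).Adj x w} := ha ▸ rfl
    exact ⟨a, this.1, this.2⟩
  set R1 : Set W := {v : W | Sum.inl v ∈ U ∧ Sum.inr v ∈ U} with hR1
  set S : Set W := {v : W | Sum.inl v ∈ U ∧ Sum.inr v ∉ U} with hS
  -- pendant partners: inr v ∈ U → inl v ∈ U
  have hinr : ∀ v : W, Sum.inr v ∈ U → Sum.inl v ∈ U := by
    intro v hv
    obtain ⟨y, hyU, hadj⟩ := hex _ hv
    match y, hadj with
    | Sum.inl w, hadj =>
      have : v = w := hadj
      rwa [this]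
  -- a vertex with its pendant in U cannot be H-matched in U
  have hpend : ∀ v ∈ R1, ∀ w : W, Sum.inl w ∈ U → H.Adj v w → False := by
    intro v hv w hw hadj
    have := huniq (Sum.inl v) hv.1 (Sum.inr v) (Sum.inl w) hv.2 hw rfl hadj
    exact Sum.inr_ne_inl this
  -- the partner function
  have hSex : ∀ v ∈ S, ∃ w, Sum.inl w ∈ U ∧ H.Adj v w := by
    intro v hv
    obtain ⟨y, hyU, hadj⟩ := hex _ hv.1
    match y, hadj with
    | Sum.inl w, hadj => exact ⟨w, hyU, hadj⟩
    | Sum.inr w, hadj =>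
      have : v = w := hadj
      exact absurd (this ▸ hyU) hv.2
  let f : W → W := fun v => if h : ∃ w, Sum.inl w ∈ U ∧ H.Adj v w then h.choose else v
  have hfspec : ∀ v ∈ S, Sum.inl (f v) ∈ U ∧ H.Adj v (f v) := by
    intro v hv
    have h := hSex v hv
    simp only [f, dif_pos h]
    exact h.choose_spec
  have hfuniq : ∀ v ∈ S, ∀ w : W, Sum.inl w ∈ U → H.Adj v w → w = f v := by
    intro v hv w hw hadj
    have := huniq (Sum.inl v) hv.1 (Sum.inl w) (Sum.inl (f v)) hw (hfspec v hv).1 hadj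
      (hfspec v hv).2
    exact Sum.inl_injective this
  have hfS : ∀ v ∈ S, f v ∈ S := by
    intro v hv
    refine ⟨(hfspec v hv).1, fun hcon => ?_⟩
    exact hpend (f v) ⟨(hfspec v hv).1, hcon⟩ v hv.1 (hfspec v hv).2.symm
  have hff : ∀ v ∈ S, f (f v) = v := by
    intro v hv
    exact (hfuniq (f v) (hfS v hv) v hv.1 (hfspec v hv).2.symm).symm
  have hAB : ∀ v ∈ S, v ∈ A → f v ∈ B := by
    intro v hv hvA
    rcases (hpart ▸ Set.mem_univ (f v) : f v ∈ A ∪ B) with h | h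
    · exact absurd (hfspec v hv).2 (hA v hvA (f v) h)
    · exact h
  have hBA : ∀ v ∈ S, v ∈ B → f v ∈ A := by
    intro v hv hvB
    rcases (hpart ▸ Set.mem_univ (f v) : f v ∈ A ∪ B) with h | h
    · exact h
    · exact absurd (hfspec v hv).2 (hB v hvB (f v) h)
  -- R2 = S ∩ A
  have hR2 : {u ∈ A | ∃ v : W, Sum.inl u ∈ U ∧ Sum.inl v ∈ U ∧ H.Adj u v} = S ∩ A := by
    ext u
    constructor
    · rintro ⟨huA, v, huU, hvU, hadj⟩
      refine ⟨⟨huU, fun hcon => hpend u ⟨huU, hcon⟩ v hvU hadj⟩, huA⟩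
    · rintro ⟨huS, huA⟩
      exact ⟨huA, f u, huS.1, (hfspec u huS).1, (hfspec u huS).2⟩
  rw [hR2] at hR
  -- independence
  have hind : ∀ u ∈ R, ∀ v ∈ R, ¬ H.Adj u v := by
    intro u hu v hv hadj
    rw [hR] at hu hv
    rcases hu with hu | hu
    · rcases hv with hv | hv
      · exact hpend u hu v hv.1 hadj
      · exact hpend u hu v hv.1.1 hadj
    · rcases hv with hv | hv
      · exact hpend v hv u hu.1.1 hadj.symm
      · exact hA u hu.2 v hv.2 hadj
  refine ⟨hind, ?_⟩
  -- cardinality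
  have hd1S : Disjoint R1 S := by
    rw [Set.disjoint_left]
    rintro v ⟨_, h2⟩ ⟨_, h4⟩
    exact h4 h2
  have hd1SA : Disjoint R1 (S ∩ A) := hd1S.mono_right Set.inter_subset_left
  have hRcard : R.ncard = R1.ncard + (S ∩ A).ncard := by
    rw [hR]
    exact Set.ncard_union_eq hd1SA (Set.toFinite _) (Set.toFinite _)
  -- |S ∩ A| = |S ∩ B|
  have himg : f '' (S ∩ A) = S ∩ B := by
    ext w
    constructor
    · rintro ⟨v, ⟨hvS, hvA⟩, rfl⟩
      exact ⟨hfS v hvS, hAB v hvS hvA⟩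
    · rintro ⟨hwS, hwB⟩
      exact ⟨f w, ⟨hfS w hwS, hBA w hwS hwB⟩, hff w hwS⟩
  have hinjf : Set.InjOn f (S ∩ A) := by
    intro x hx y hy hxy
    rw [← hff x hx.1, ← hff y hy.1, hxy]
  have hcardAB : (S ∩ A).ncard = (S ∩ B).ncard := by
    rw [← himg, Set.ncard_image_of_injOn hinjf]
  -- |S| = |S∩A| + |S∩B|
  have hSsplit : S = (S ∩ A) ∪ (S ∩ B) := by
    rw [← Set.inter_union_distrib_left, hpart, Set.inter_univ]
  have hdAB : Disjoint (S ∩ A) (S ∩ B) :=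
    Set.disjoint_of_subset Set.inter_subset_right Set.inter_subset_right hdisj
  have hScard : S.ncard = (S ∩ A).ncard + (S ∩ B).ncard := by
    nth_rewrite 1 [hSsplit]
    exact Set.ncard_union_eq hdAB (Set.toFinite _) (Set.toFinite _)
  -- decompose U
  have hUeq : U = Sum.inl '' (R1 ∪ S) ∪ Sum.inr '' R1 := by
    ext x
    match x with
    | Sum.inl v =>
      simp only [Set.mem_union, Set.mem_image, Sum.inl.injEq, Sum.inr_ne_inl, and_false,
        exists_false, or_false]
      constructor
      · intro hv
        by_cases h : Sum.inr v ∈ U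
        · exact ⟨v, Or.inl ⟨hv, h⟩, rfl⟩
        · exact ⟨v, Or.inr ⟨hv, h⟩, rfl⟩
      · rintro ⟨w, hw, hwv⟩
        cases hwv
        rcases hw with hw | hw
        · exact hw.1
        · exact hw.1
    | Sum.inr v =>
      simp only [Set.mem_union, Set.mem_image, Sum.inr.injEq, Sum.inl_ne_inr, and_false,
        exists_false, false_or]
      constructor
      · intro hv
        exact ⟨v, ⟨hinr v hv, hv⟩, rfl⟩
      · rintro ⟨w, hw, hwv⟩
        cases hwv
        exact hw.2
  have hUcard : U.ncard = (R1.ncard + S.ncard) + R1.ncard := by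
    rw [hUeq, Set.ncard_union_eq ?_ (Set.toFinite _) (Set.toFinite _),
      Set.ncard_image_of_injective _ Sum.inl_injective,
      Set.ncard_image_of_injective _ Sum.inr_injective,
      Set.ncard_union_eq hd1S (Set.toFinite _) (Set.toFinite _)]
    · rw [Set.disjoint_left]
      rintro x ⟨v, _, rfl⟩ ⟨w, _, hco⟩
      exact Sum.inr_ne_inl hco
  rw [hUcard, hScard, hcardAB] at hcard
  rw [hRcard]
  omega
end

section
/- Let G be a graph, C a connected component of G[U] for a d-regular set U with C a clique of size d+1 containing vertices u and w. If w' is a true twin of w in G with w' ∉ U, then (C \ {u}) ∪ {w'} induces a (d+1)-clique in G, and it is a connected component of G[(U \ {u}) ∪ {w'}]. -/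
theorem stmt_15 {V : Type*} [Fintype V] [DecidableEq V] (G : SimpleGraph V)
    (d : ℕ) (U : Set V) (hreg : regSet G d U)
    (hcomp : cliqueComponents G d U)
    (C : Set V) (hCU : C ⊆ U) (hCclique : G.IsClique C) (hCcard : C.ncard = d + 1)
    (hCclosed : ∀ x ∈ C, ∀ y ∈ U, G.Adj x y → y ∈ C)
    (u w : V) (huC : u ∈ C) (hwC : w ∈ C)
    (w' : V) (htw : trueTwins G w w') (hw' : w' ∉ U) :
    G.IsClique (C \ {u} ∪ {w'}) ∧ (C \ {u} ∪ {w'}).ncard = d + 1 ∧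
    (C \ {u} ∪ {w'}) ⊆ (U \ {u} ∪ {w'}) ∧
    (∀ x ∈ C \ {u} ∪ {w'}, ∀ y ∈ U \ {u} ∪ {w'}, G.Adj x y → y ∈ C \ {u} ∪ {w'}) := by
  obtain ⟨hne, hN⟩ := htw
  have hw'C : w' ∉ C := fun h => hw' (hCU h)
  have hadj : ∀ x ∈ C, x ≠ w' → G.Adj x w' := by
    intro x hx hxw'
    have hmem : x ∈ G.neighborSet w ∪ {w} := by
      by_cases hxw : x = w
      · right; simp [hxw]
      · left
        exact hCclique hwC hx (Ne.symm hxw)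
    rw [hN] at hmem
    rcases hmem with h | h
    · exact h.symm
    · exact absurd h hxw'
  have hclique : G.IsClique (C \ {u} ∪ {w'}) := by
    intro x hx y hy hxy
    rcases hx with hx | hx <;> rcases hy with hy | hy
    · exact hCclique hx.1 hy.1 hxy
    · rcases hy with rfl
      exact hadj x hx.1 (fun h => hw'C (h ▸ hx.1))
    · rcases hx with rfl
      exact (hadj y hy.1 (fun h => hw'C (h ▸ hy.1))).symm
    · rcases hx with rfl; rcases hy with rfl; exact absurd rfl hxy
  have hCfin : C.Finite := Set.toFinite C
  have hcard : (C \ {u} ∪ {w'}).ncard = d + 1 := by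
    have h1 : (C \ {u}).ncard = d := by
      rw [Set.ncard_diff_singleton_of_mem huC, hCcard]
      omega
    have hnot : w' ∉ C \ {u} := fun h => hw'C h.1
    have : C \ {u} ∪ {w'} = insert w' (C \ {u}) := by
      ext z; simp [or_comm]
    rw [this, Set.ncard_insert_of_notMem hnot, h1]
  refine ⟨hclique, hcard, ?_, ?_⟩
  · rintro z (hz | hz)
    · exact Or.inl ⟨hCU hz.1, hz.2⟩
    · exact Or.inr hz
  · rintro x (hx | hx) y (hy | hy) hadjxy
    · exact Or.inl ⟨hCclosed x hx.1 y hy.1 hadjxy, hy.2⟩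
    · exact Or.inr hy
    · have hx' : x = w' := hx
      subst hx'
      rcases hy with ⟨hyU, hyu⟩
      have hyw : y ∈ G.neighborSet w ∪ {w} := by
        rw [hN]; exact Or.inl hadjxy
      rcases hyw with h | h
      · exact Or.inl ⟨hCclosed w hwC y hyU h, hyu⟩
      · rcases h with rfl
        exact Or.inl ⟨hwC, hyu⟩
    · exact Or.inr hy
end

section
/- Let d ≥ 2, let C be a cycle with vertex classes V_1, ..., V_L (L a multiple of 2d), and attach for each block of 2d consecutive classes independent sets A_i and B_i of size d−2, joining A_i completely to the odd-indexed classes of the block and B_i completely to the even-indexed classes. If U consists of exactly one vertex from each V_j (forming an induced cycle through V_1, ..., V_L in order) together with all vertices of all A_i and B_i, then U is a connected d-regular set: each cycle vertex has degree 2 + (d−2) = d and each vertex of A_i ∪ B_i has degree d in G[U]. -/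
/-- The gadget graph: classes `V_j = {j} × Fin s` for `j : Fin L` arranged
cyclically with complete joins between consecutive classes, and for each
`i : Fin m` independent sets `A_i` (`b = false`) and `B_i` (`b = true`) of size
`d - 2`, where `A_i` is completely joined to the odd-position classes of the
`i`-th block of `2d` consecutive classes and `B_i` to the even-position ones.
(Classes are indexed from `0`, so the classes joined to `A_i` have indices
`2d·i + 2l` and those joined to `B_i` have indices `2d·i + 2l + 1`,
for `l = 0, …, d-1`.) -/
def gadget (L s d m : ℕ) :
    SimpleGraph ((Fin L × Fin s) ⊕ (Fin m × Bool × Fin (d - 2))) :=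
  SimpleGraph.fromRel (fun x y =>
    match x, y with
    | .inl (j, _), .inl (k, _) => (k : ℕ) = ((j : ℕ) + 1) % L
    | .inl (j, _), .inr (i, b, _) =>
        ∃ l : Fin d, (j : ℕ) = 2 * d * (i : ℕ) + 2 * (l : ℕ) + (cond b 1 0)
    | .inr (i, b, _), .inl (j, _) =>
        ∃ l : Fin d, (j : ℕ) = 2 * d * (i : ℕ) + 2 * (l : ℕ) + (cond b 1 0)
    | .inr _, .inr _ => False)

lemma decompNat {d i i' t t' : ℕ} (ht : t < 2*d) (ht' : t' < 2*d)
    (h : 2*d*i + t = 2*d*i' + t') : i = i' ∧ t = t' := by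
  have hd : 0 < 2*d := by omega
  have h1 : (2*d*i + t) / (2*d) = i := by
    rw [Nat.mul_add_div hd, Nat.div_eq_of_lt ht, Nat.add_zero]
  have h2 : (2*d*i' + t') / (2*d) = i' := by
    rw [Nat.mul_add_div hd, Nat.div_eq_of_lt ht', Nat.add_zero]
  rw [h] at h1; rw [h2] at h1; subst h1
  exact ⟨rfl, Nat.add_left_cancel h⟩

lemma adj_ll {L s d m : ℕ} (j k : Fin L) (x y : Fin s) :
    (gadget L s d m).Adj (.inl (j,x)) (.inl (k,y)) ↔
      Sum.inl (j,x) ≠ (Sum.inl (k,y) : (Fin L × Fin s) ⊕ (Fin m × Bool × Fin (d-2))) ∧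
        ((k:ℕ) = ((j:ℕ)+1)%L ∨ (j:ℕ) = ((k:ℕ)+1)%L) := by
  simp [gadget, SimpleGraph.fromRel_adj]

lemma adj_lr {L s d m : ℕ} (j : Fin L) (x : Fin s) (i : Fin m) (b : Bool) (c : Fin (d-2)) :
    (gadget L s d m).Adj (.inl (j,x)) (.inr (i,b,c)) ↔
      ∃ l : Fin d, (j : ℕ) = 2 * d * (i : ℕ) + 2 * (l : ℕ) + (cond b 1 0) := by
  simp [gadget, SimpleGraph.fromRel_adj]

lemma adj_rl {L s d m : ℕ} (j : Fin L) (x : Fin s) (i : Fin m) (b : Bool) (c : Fin (d-2)) :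
    (gadget L s d m).Adj (.inr (i,b,c)) (.inl (j,x)) ↔
      ∃ l : Fin d, (j : ℕ) = 2 * d * (i : ℕ) + 2 * (l : ℕ) + (cond b 1 0) := by
  simp [gadget, SimpleGraph.fromRel_adj]

lemma adj_rr {L s d m : ℕ} (i i' : Fin m) (b b' : Bool) (c c' : Fin (d-2)) :
    ¬ (gadget L s d m).Adj (.inr (i,b,c)) (.inr (i',b',c')) := by
  simp [gadget, SimpleGraph.fromRel_adj]

example (d i x : ℕ) (h : 2*d*i + x = 5) (h2 : x ≤ 1) : 2*d*i + (x + 0) ≤ 5 := by omega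

theorem stmt_16 (d m s L : ℕ) (hd : 2 ≤ d) (hm : 1 ≤ m) (hL : L = 2 * d * m)
    (u : Fin L → Fin s)
    (U : Set ((Fin L × Fin s) ⊕ (Fin m × Bool × Fin (d - 2))))
    (hU : U = (Set.range fun j : Fin L => Sum.inl (j, u j)) ∪ Set.range Sum.inr) :
    regSet (gadget L s d m) d U ∧ ((gadget L s d m).induce U).Connected := by
  have hL4 : 4 ≤ L := by
    calc (4:ℕ) ≤ 2*d := by omega
      _ = 2*d*1 := by ring
      _ ≤ 2*d*m := Nat.mul_le_mul_left _ hm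
      _ = L := hL.symm
  have hd2 : 0 < 2*d := by omega
  have hbound : ∀ (i : Fin m) (l : Fin d) (b : Bool),
      2*d*(i:ℕ) + 2*(l:ℕ) + cond b 1 0 < L := by
    intro i l b
    have hb : cond b 1 0 ≤ 1 := by cases b <;> simp
    have hl := l.isLt
    calc 2*d*(i:ℕ) + 2*(l:ℕ) + cond b 1 0 < 2*d*(i:ℕ) + 2*d := by omega
      _ = 2*d*((i:ℕ)+1) := by ring
      _ ≤ 2*d*m := Nat.mul_le_mul_left _ i.isLt
      _ = L := hL.symm
  have inl_ne : ∀ (a b : ℕ) (ha : a < L) (hb : b < L), a ≠ b →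
      (Sum.inl ((⟨a,ha⟩ : Fin L), u ⟨a,ha⟩) :
        (Fin L × Fin s) ⊕ (Fin m × Bool × Fin (d-2))) ≠
      Sum.inl ((⟨b,hb⟩ : Fin L), u ⟨b,hb⟩) := by
    intro a b ha hb hab hcon
    injection hcon with h
    exact hab (congrArg (fun p => (p.1 : ℕ)) h)
  constructor
  · -- regularity
    intro v hv
    rw [hU] at hv
    rcases hv with ⟨j, rfl⟩ | ⟨⟨i, b, c⟩, rfl⟩
    · -- cycle vertex
      have hj := j.isLt
      set jm : ℕ := if (j:ℕ) = 0 then L-1 else (j:ℕ)-1 with hjm_def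
      set jp : ℕ := ((j:ℕ)+1) % L with hjp_def
      have hjp_val : jp = if (j:ℕ) = L-1 then 0 else (j:ℕ)+1 := by
        rw [hjp_def]; split_ifs with h
        · rw [show (j:ℕ)+1 = L from by omega, Nat.mod_self]
        · exact Nat.mod_eq_of_lt (by omega)
      have hjm : jm < L := by rw [hjm_def]; split_ifs <;> omega
      have hjp : jp < L := by rw [hjp_val]; split_ifs <;> omega
      have hne : jm ≠ jp ∧ jm ≠ (j:ℕ) ∧ jp ≠ (j:ℕ) := by
        rw [hjm_def, hjp_val]; split_ifs <;> omega
      have hjm_eq : ∀ k : ℕ, k < L → ((j:ℕ) = (k+1) % L ↔ k = jm) := by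
        intro k hk
        rw [hjm_def]
        split_ifs with h0
        · constructor
          · intro hkk
            by_cases hkL : k+1 = L
            · omega
            · rw [Nat.mod_eq_of_lt (by omega)] at hkk; omega
          · intro hkk; subst hkk
            rw [show (L-1)+1 = L from by omega, Nat.mod_self]; omega
        · constructor
          · intro hkk
            by_cases hkL : k+1 = L
            · rw [hkL, Nat.mod_self] at hkk; omega
            · rw [Nat.mod_eq_of_lt (by omega)] at hkk; omega
          · intro hkk; subst hkk
            rw [show (j:ℕ)-1+1 = (j:ℕ) from by omega, Nat.mod_eq_of_lt hj]
      set i₀ : ℕ := (j:ℕ) / (2*d) with hi₀_def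
      set r : ℕ := (j:ℕ) % (2*d) with hr_def
      have hr : 2*d*i₀ + r = (j:ℕ) := Nat.div_add_mod _ _
      have hrlt : r < 2*d := Nat.mod_lt _ hd2
      have hi₀ : i₀ < m := by
        rw [hi₀_def]
        refine (Nat.div_lt_iff_lt_mul hd2).mpr ?_
        calc (j:ℕ) < L := hj
          _ = m*(2*d) := by rw [hL]; ring
      obtain ⟨b₀, hcb⟩ : ∃ b : Bool, cond b 1 0 = r % 2 := by
        rcases Nat.mod_two_eq_zero_or_one r with h | h
        · exact ⟨false, by simp [h]⟩
        · exact ⟨true, by simp [h]⟩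
      have hkey : ∀ (i : Fin m) (b : Bool),
          (∃ l : Fin d, (j:ℕ) = 2*d*(i:ℕ) + 2*(l:ℕ) + cond b 1 0) ↔
            ((i:ℕ) = i₀ ∧ b = b₀) := by
        intro i b
        constructor
        · rintro ⟨l, hl⟩
          have hb1 : cond b 1 0 ≤ 1 := by cases b <;> simp
          have hll := l.isLt
          have heq : 2*d*(i:ℕ) + (2*(l:ℕ) + cond b 1 0) = 2*d*i₀ + r := by omega
          obtain ⟨h1, h2⟩ := decompNat (by omega) hrlt heq
          refine ⟨h1, ?_⟩
          have hmod : cond b 1 0 = cond b₀ 1 0 := by rw [hcb]; omega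
          cases b <;> cases b₀
          · rfl
          · exact absurd hmod (by decide)
          · exact absurd hmod (by decide)
          · rfl
        · rintro ⟨h1, h2⟩
          refine ⟨⟨r/2, by omega⟩, ?_⟩
          show (j:ℕ) = 2*d*(i:ℕ) + 2*(r/2) + cond b 1 0
          rw [h1, h2, hcb]
          omega
      set f : Bool ⊕ Fin (d-2) → (Fin L × Fin s) ⊕ (Fin m × Bool × Fin (d-2)) :=
        Sum.elim
          (fun t => cond t (Sum.inl ((⟨jp, hjp⟩ : Fin L), u ⟨jp, hjp⟩))
            (Sum.inl ((⟨jm, hjm⟩ : Fin L), u ⟨jm, hjm⟩)))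
          (fun c => Sum.inr ((⟨i₀, hi₀⟩ : Fin m), b₀, c)) with hf_def
      have hfinj : Function.Injective f := by
        rintro (t|c) (t'|c') h <;>
          simp only [hf_def, Sum.elim_inl, Sum.elim_inr] at h
        · cases t <;> cases t' <;>
            simp only [Bool.cond_false, Bool.cond_true] at h
          · rfl
          · exact absurd h (inl_ne _ _ _ _ hne.1)
          · exact absurd h (inl_ne _ _ _ _ (Ne.symm hne.1))
          · rfl
        · cases t <;> simp only [Bool.cond_false, Bool.cond_true] at h <;>
            exact nomatch h
        · cases t' <;> simp only [Bool.cond_false, Bool.cond_true] at h <;>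
            exact nomatch h
        · injection h with h2
          exact congrArg Sum.inr (congrArg (fun p => p.2.2) h2)
      have hset : {w ∈ U | (gadget L s d m).Adj (Sum.inl (j, u j)) w} = Set.range f := by
        ext w
        simp only [Set.mem_setOf_eq, Set.mem_range, hU, Set.mem_union, Set.mem_range]
        constructor
        · rintro ⟨hw, hadj⟩
          rcases hw with ⟨k, rfl⟩ | ⟨⟨i, b, c⟩, rfl⟩
          · rw [adj_ll] at hadj
            rcases hadj.2 with h | h
            · have hk : k = (⟨jp, hjp⟩ : Fin L) := Fin.ext h
              subst hk
              exact ⟨Sum.inl true, by simp only [hf_def, Sum.elim_inl, Bool.cond_true]⟩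
            · have hk : k = (⟨jm, hjm⟩ : Fin L) := Fin.ext ((hjm_eq _ k.isLt).mp h)
              subst hk
              exact ⟨Sum.inl false, by simp only [hf_def, Sum.elim_inl, Bool.cond_false]⟩
          · rw [adj_lr] at hadj
            obtain ⟨h1, h2⟩ := (hkey i b).mp hadj
            have hi : i = (⟨i₀, hi₀⟩ : Fin m) := Fin.ext h1
            subst hi; subst h2
            exact ⟨Sum.inr c, by simp only [hf_def, Sum.elim_inr]⟩
        · rintro ⟨a, rfl⟩
          rcases a with t | c
          · cases t <;>
              simp only [hf_def, Sum.elim_inl, Bool.cond_false, Bool.cond_true]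
            · refine ⟨Or.inl ⟨⟨jm, hjm⟩, rfl⟩, ?_⟩
              rw [adj_ll]
              exact ⟨inl_ne (↑j) jm j.isLt hjm (fun hcon => hne.2.1 hcon.symm),
                Or.inr ((hjm_eq jm hjm).mpr rfl)⟩
            · refine ⟨Or.inl ⟨⟨jp, hjp⟩, rfl⟩, ?_⟩
              rw [adj_ll]
              exact ⟨inl_ne (↑j) jp j.isLt hjp (fun hcon => hne.2.2 hcon.symm),
                Or.inl hjp_def.symm⟩
          · refine ⟨Or.inr ⟨_, rfl⟩, ?_⟩
            simp only [hf_def, Sum.elim_inr]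
            rw [adj_lr]
            exact (hkey _ _).mpr ⟨rfl, rfl⟩
      rw [hset, ← Set.image_univ, Set.ncard_image_of_injective _ hfinj, Set.ncard_univ]
      simp only [Nat.card_eq_fintype_card, Fintype.card_sum, Fintype.card_bool,
        Fintype.card_fin]
      omega
    · -- attachment vertex
      set f : Fin d → (Fin L × Fin s) ⊕ (Fin m × Bool × Fin (d-2)) :=
        fun l => Sum.inl ((⟨2*d*(i:ℕ) + 2*(l:ℕ) + cond b 1 0, hbound i l b⟩ : Fin L),
          u ⟨2*d*(i:ℕ) + 2*(l:ℕ) + cond b 1 0, hbound i l b⟩) with hf_def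
      have hfinj : Function.Injective f := by
        intro l l' h
        simp only [hf_def] at h
        injection h with h2
        have h3 := congrArg (fun p => ((p.1 : Fin L) : ℕ)) h2
        simp only [] at h3
        exact Fin.ext (by omega)
      have hset : {w ∈ U | (gadget L s d m).Adj (Sum.inr (i, b, c)) w} = Set.range f := by
        ext w
        simp only [Set.mem_setOf_eq, Set.mem_range, hU, Set.mem_union, Set.mem_range]
        constructor
        · rintro ⟨hw, hadj⟩
          rcases hw with ⟨k, rfl⟩ | ⟨⟨i', b', c'⟩, rfl⟩
          · rw [adj_rl] at hadj
            obtain ⟨l, hl⟩ := hadj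
            refine ⟨l, ?_⟩
            have hk : (⟨2*d*(i:ℕ) + 2*(l:ℕ) + cond b 1 0, hbound i l b⟩ : Fin L) = k :=
              Fin.ext hl.symm
            simp only [hf_def]
            rw [hk]
          · exact absurd hadj (adj_rr _ _ _ _ _ _)
        · rintro ⟨l, rfl⟩
          simp only [hf_def]
          refine ⟨Or.inl ⟨_, rfl⟩, ?_⟩
          rw [adj_rl]
          exact ⟨l, rfl⟩
      rw [hset, ← Set.image_univ, Set.ncard_image_of_injective _ hfinj, Set.ncard_univ]
      simp
  · -- connectivity
    rw [SimpleGraph.connected_iff_exists_forall_reachable]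
    have h0L : 0 < L := by omega
    have hmemL : ∀ j : Fin L, Sum.inl (j, u j) ∈ U := by
      intro j; rw [hU]; exact Or.inl ⟨_, rfl⟩
    refine ⟨⟨Sum.inl ((⟨0, h0L⟩ : Fin L), u ⟨0, h0L⟩), hmemL _⟩, ?_⟩
    have hstep : ∀ k : ℕ, ∀ hk : k < L,
        ((gadget L s d m).induce U).Reachable
          ⟨Sum.inl ((⟨0, h0L⟩ : Fin L), u ⟨0, h0L⟩), hmemL _⟩
          ⟨Sum.inl ((⟨k, hk⟩ : Fin L), u ⟨k, hk⟩), hmemL _⟩ := by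
      intro k
      induction k with
      | zero => intro hk; exact SimpleGraph.Reachable.refl _
      | succ n ih =>
        intro hk
        have hn : n < L := by omega
        have hGadj : (gadget L s d m).Adj
            (Sum.inl ((⟨n, hn⟩ : Fin L), u ⟨n, hn⟩))
            (Sum.inl ((⟨n+1, hk⟩ : Fin L), u ⟨n+1, hk⟩)) := by
          rw [adj_ll]
          refine ⟨inl_ne _ _ _ _ (by omega), Or.inl ?_⟩
          show n+1 = (n+1) % L
          rw [Nat.mod_eq_of_lt hk]
        have hadj : ((gadget L s d m).induce U).Adj
            ⟨Sum.inl ((⟨n, hn⟩ : Fin L), u ⟨n, hn⟩), hmemL _⟩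
            ⟨Sum.inl ((⟨n+1, hk⟩ : Fin L), u ⟨n+1, hk⟩), hmemL _⟩ := hGadj
        exact (ih hn).trans hadj.reachable
    rintro ⟨x, hx⟩
    rw [hU] at hx
    rcases hx with ⟨k, rfl⟩ | ⟨⟨i, b, c⟩, rfl⟩
    · exact hstep k.1 k.2
    · have hb1 : 2*d*(i:ℕ) + 2*(((⟨0, by omega⟩ : Fin d)):ℕ) + cond b 1 0 < L :=
        hbound i ⟨0, by omega⟩ b
      have hGadj : (gadget L s d m).Adj
          (Sum.inl ((⟨2*d*(i:ℕ) + 2*(((⟨0, by omega⟩ : Fin d)):ℕ) + cond b 1 0, hb1⟩ : Fin L),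
            u ⟨2*d*(i:ℕ) + 2*(((⟨0, by omega⟩ : Fin d)):ℕ) + cond b 1 0, hb1⟩))
          (Sum.inr (i, b, c)) := by
        rw [adj_lr]
        exact ⟨⟨0, by omega⟩, rfl⟩
      have hadj : ((gadget L s d m).induce U).Adj
          ⟨Sum.inl ((⟨2*d*(i:ℕ) + 2*(((⟨0, by omega⟩ : Fin d)):ℕ) + cond b 1 0, hb1⟩ : Fin L),
            u ⟨2*d*(i:ℕ) + 2*(((⟨0, by omega⟩ : Fin d)):ℕ) + cond b 1 0, hb1⟩), hmemL _⟩
          ⟨Sum.inr (i, b, c), by rw [hU]; exact Or.inr ⟨_, rfl⟩⟩ := hGadj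
      exact (hstep _ hb1).trans hadj.reachable
end

section
/- If ⟨U_0, ..., U_ℓ⟩ is a token-jumping sequence of d-regular sets of a graph G with d ≥ 1 and U_0 is connected, then every U_i is connected. -/
section Aux

variable {V : Type*} [Fintype V] (G : SimpleGraph V) {d : ℕ} {A B : Set V} {u v : V}

lemma key_adj (hA : regSet G d A) (hB : regSet G d B)
    (hu : A \ B = {u}) (hv : B \ A = {v}) :
    ∀ w ∈ A ∩ B, (G.Adj w u ↔ G.Adj w v) := by
  classical
  intro w hw
  have huA : u ∈ A ∧ u ∉ B := by
    have : u ∈ A \ B := hu ▸ rfl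
    exact ⟨this.1, this.2⟩
  have hvB : v ∈ B ∧ v ∉ A := by
    have : v ∈ B \ A := hv ▸ rfl
    exact ⟨this.1, this.2⟩
  set s : Set V := {x ∈ A ∩ B | G.Adj w x} with hs
  have hsfin : s.Finite := Set.toFinite _
  have hus : u ∉ s := fun h => huA.2 h.1.2
  have hvs : v ∉ s := fun h => hvB.2 h.1.1
  have hAsplit : {x ∈ A | G.Adj w x} = if G.Adj w u then insert u s else s := by
    split_ifs with h
    · ext x
      simp only [Set.mem_insert_iff, Set.mem_setOf_eq, hs]
      constructor
      · rintro ⟨hxA, hadj⟩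
        by_cases hxB : x ∈ B
        · exact Or.inr ⟨⟨hxA, hxB⟩, hadj⟩
        · left
          have : x ∈ A \ B := ⟨hxA, hxB⟩
          rw [hu] at this; exact this
      · rintro (rfl | ⟨⟨hxA, _⟩, hadj⟩)
        · exact ⟨huA.1, h⟩
        · exact ⟨hxA, hadj⟩
    · ext x
      simp only [Set.mem_setOf_eq, hs]
      constructor
      · rintro ⟨hxA, hadj⟩
        by_cases hxB : x ∈ B
        · exact ⟨⟨hxA, hxB⟩, hadj⟩
        · have : x ∈ A \ B := ⟨hxA, hxB⟩
          rw [hu] at this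
          exact absurd (this ▸ hadj) h
      · rintro ⟨⟨hxA, _⟩, hadj⟩
        exact ⟨hxA, hadj⟩
  have hBsplit : {x ∈ B | G.Adj w x} = if G.Adj w v then insert v s else s := by
    split_ifs with h
    · ext x
      simp only [Set.mem_insert_iff, Set.mem_setOf_eq, hs]
      constructor
      · rintro ⟨hxB, hadj⟩
        by_cases hxA : x ∈ A
        · exact Or.inr ⟨⟨hxA, hxB⟩, hadj⟩
        · left
          have : x ∈ B \ A := ⟨hxB, hxA⟩
          rw [hv] at this; exact this
      · rintro (rfl | ⟨⟨_, hxB⟩, hadj⟩)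
        · exact ⟨hvB.1, h⟩
        · exact ⟨hxB, hadj⟩
    · ext x
      simp only [Set.mem_setOf_eq, hs]
      constructor
      · rintro ⟨hxB, hadj⟩
        by_cases hxA : x ∈ A
        · exact ⟨⟨hxA, hxB⟩, hadj⟩
        · have : x ∈ B \ A := ⟨hxB, hxA⟩
          rw [hv] at this
          exact absurd (this ▸ hadj) h
      · rintro ⟨⟨_, hxB⟩, hadj⟩
        exact ⟨hxB, hadj⟩
  have hcardA := hA w hw.1
  have hcardB := hB w hw.2
  rw [hAsplit] at hcardA
  rw [hBsplit] at hcardB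
  constructor
  · intro h
    by_contra h'
    rw [if_pos h, Set.ncard_insert_of_notMem hus hsfin] at hcardA
    rw [if_neg h'] at hcardB
    omega
  · intro h
    by_contra h'
    rw [if_pos h, Set.ncard_insert_of_notMem hvs hsfin] at hcardB
    rw [if_neg h'] at hcardA
    omega

lemma swap_connected [DecidableEq V] (hA : regSet G d A) (hB : regSet G d B)
    (hu : A \ B = {u}) (hv : B \ A = {v})
    (hconn : (G.induce A).Connected) : (G.induce B).Connected := by
  classical
  have huA : u ∈ A ∧ u ∉ B := by
    have : u ∈ A \ B := hu ▸ rfl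
    exact ⟨this.1, this.2⟩
  have hvB : v ∈ B ∧ v ∉ A := by
    have : v ∈ B \ A := hv ▸ rfl
    exact ⟨this.1, this.2⟩
  have hAB : ∀ x ∈ A, x ≠ u → x ∈ B := by
    intro x hx hne
    by_contra hxB
    exact hne (by have : x ∈ A \ B := ⟨hx, hxB⟩; rwa [hu] at this)
  have hBA : ∀ x ∈ B, x ≠ v → x ∈ A := by
    intro x hx hne
    by_contra hxA
    exact hne (by have : x ∈ B \ A := ⟨hx, hxA⟩; rwa [hv] at this)
  have hkey := key_adj G hA hB hu hv
  let e : ↥A ≃ ↥B :=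
    { toFun := fun x => if h : (x : V) = u then ⟨v, hvB.1⟩ else ⟨x, hAB x x.2 h⟩
      invFun := fun y => if h : (y : V) = v then ⟨u, huA.1⟩ else ⟨y, hBA y y.2 h⟩
      left_inv := by
        rintro ⟨x, hx⟩
        dsimp only
        by_cases h : x = u
        · rw [dif_pos h, dif_pos rfl]
          exact Subtype.ext h.symm
        · rw [dif_neg h]
          exact dif_neg (fun hc : x = v => hvB.2 (hc ▸ hx))
      right_inv := by
        rintro ⟨y, hy⟩
        dsimp only
        by_cases h : y = v
        · rw [dif_pos h, dif_pos rfl]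
          exact Subtype.ext h.symm
        · rw [dif_neg h]
          exact dif_neg (fun hc : y = u => huA.2 (hc ▸ hy)) }
  have hmap : ∀ (a b : ↥A), G.Adj ((e a : V)) (e b) ↔ G.Adj a b := by
    rintro ⟨a, ha⟩ ⟨b, hb⟩
    by_cases hau : a = u <;> by_cases hbu : b = u
    · simp only [e, Equiv.coe_fn_mk, dif_pos hau, dif_pos hbu]
      rw [hau, hbu]
      simp
    · have hbB : b ∈ A ∩ B := ⟨hb, hAB b hb hbu⟩
      simp only [e, Equiv.coe_fn_mk, dif_pos hau, dif_neg hbu]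
      rw [hau, G.adj_comm v b, G.adj_comm u b]
      exact (hkey b hbB).symm
    · have haB : a ∈ A ∩ B := ⟨ha, hAB a ha hau⟩
      simp only [e, Equiv.coe_fn_mk, dif_pos hbu, dif_neg hau]
      rw [hbu]
      exact (hkey a haB).symm
    · simp only [e, Equiv.coe_fn_mk, dif_neg hau, dif_neg hbu]
  let iso : (G.induce A) ≃g (G.induce B) :=
    { toEquiv := e
      map_rel_iff' := by
        intro a b
        simp only [SimpleGraph.comap_adj, Function.Embedding.coe_subtype]
        exact hmap a b }
  exact iso.connected_iff.mp hconn

end Aux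

theorem stmt_18 {V : Type*} [Fintype V] [DecidableEq V] (G : SimpleGraph V)
    (d ℓ : ℕ) (hd : 1 ≤ d) (U : ℕ → Set V)
    (hreg : ∀ i ≤ ℓ, regSet G d (U i))
    (hstep : ∀ i < ℓ, (U i \ U (i + 1)).ncard = 1 ∧ (U (i + 1) \ U i).ncard = 1)
    (hconn : (G.induce (U 0)).Connected) :
    ∀ i ≤ ℓ, (G.induce (U i)).Connected := by
  intro i
  induction i with
  | zero => intro _; exact hconn
  | succ n ih =>
    intro hn
    have hnl : n < ℓ := hn
    obtain ⟨h1, h2⟩ := hstep n hnl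
    obtain ⟨u, hu⟩ := Set.ncard_eq_one.mp h1
    obtain ⟨v, hv⟩ := Set.ncard_eq_one.mp h2
    exact swap_connected G (hreg n hnl.le) (hreg (n + 1) hn) hu hv (ih hnl.le)
end

section
/- In a split graph, any d-regular set with d ≥ 1 induces a subgraph with at most one connected component that contains an edge; consequently, for d ≥ 1, every d-regular set of a split graph induces a single clique on d+1 vertices together with possibly no other components, i.e., G[U] is connected and is a (d+1)-clique. -/
theorem stmt_19 {V : Type*} [Fintype V] [DecidableEq V] (G : SimpleGraph V)
    (K S : Set V) (hpart : K ∪ S = Set.univ) (hdisj : Disjoint K S)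
    (hK : G.IsClique K) (hS : ∀ u ∈ S, ∀ v ∈ S, ¬ G.Adj u v)
    (d : ℕ) (hd : 1 ≤ d) (U : Set V) (hne : U.Nonempty) (hreg : regSet G d U) :
    (G.induce U).Connected ∧ G.IsClique U ∧ U.ncard = d + 1 := by
  classical
  have hKS : ∀ x : V, x ∈ K ∨ x ∈ S := by
    intro x
    have : x ∈ K ∪ S := hpart ▸ Set.mem_univ x
    exact this
  set N : V → Set V := fun u => {w ∈ U | G.Adj u w} with hN
  have hclique : G.IsClique U := by
    by_cases hB : ∃ v ∈ U, v ∈ S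
    · obtain ⟨u, huU, huS⟩ := hB
      set A := K ∩ U with hA
      have hNA : ∀ v ∈ U, v ∈ S → N v ⊆ A := by
        rintro v hvU hvS x ⟨hxU, hadj⟩
        refine ⟨?_, hxU⟩
        rcases hKS x with h | h
        · exact h
        · exact absurd hadj (hS v hvS x h)
      have hNuA : N u ⊆ A := hNA u huU huS
      have hdA : d ≤ A.ncard := by
        rw [← hreg u huU]
        exact Set.ncard_le_ncard hNuA A.toFinite
      have hNune : (N u).Nonempty := by
        rw [← Set.ncard_pos (Set.toFinite _), hreg u huU]
        omega
      obtain ⟨w, hwNu⟩ := hNune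
      have hwA : w ∈ A := hNuA hwNu
      have hnotAS : ∀ x ∈ A, x ∉ S := fun x hx hxS =>
        Set.disjoint_left.mp hdisj hx.1 hxS
      have huA : u ∉ A := fun h => hnotAS u h huS
      have hsub : insert u (A \ {w}) ⊆ N w := by
        rintro x hx
        rcases Set.mem_insert_iff.mp hx with rfl | ⟨hxA, hxw⟩
        · exact ⟨huU, hwNu.2.symm⟩
        · exact ⟨hxA.2, hK hwA.1 hxA.1 (fun h => hxw (h ▸ rfl))⟩
      have hucard : (insert u (A \ {w})).ncard = A.ncard := by
        rw [Set.ncard_insert_of_notMem (fun h => huA h.1) (Set.toFinite _)]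
        exact Set.ncard_diff_singleton_add_one hwA A.toFinite
      have hAd : A.ncard ≤ d := by
        rw [← hucard, ← hreg w hwNu.1]
        exact Set.ncard_le_ncard hsub (Set.toFinite _)
      have hAcard : A.ncard = d := le_antisymm hAd hdA
      have hNeqA : ∀ v ∈ U, v ∈ S → N v = A := by
        intro v hvU hvS
        refine Set.eq_of_subset_of_ncard_le (hNA v hvU hvS) ?_ A.toFinite
        rw [hreg v hvU, hAcard]
      have hNw : insert u (A \ {w}) = N w := by
        refine Set.eq_of_subset_of_ncard_le hsub ?_ (Set.toFinite _)
        rw [hucard, hreg w hwNu.1, hAcard]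
      have hBu : ∀ v ∈ U, v ∈ S → v = u := by
        intro v hvU hvS
        have hwNv : w ∈ N v := (hNeqA v hvU hvS) ▸ hwA
        have hvNw : v ∈ N w := ⟨hvU, hwNv.2.symm⟩
        rw [← hNw] at hvNw
        rcases Set.mem_insert_iff.mp hvNw with h | h
        · exact h
        · exact absurd hvS (hnotAS v h.1)
      intro x hxU y hyU hxy
      rcases hKS x with hxK | hxS <;> rcases hKS y with hyK | hyS
      · exact hK hxK hyK hxy
      · have hy : y = u := hBu y hyU hyS
        subst hy
        have : x ∈ N y := (hNeqA y hyU hyS) ▸ (⟨hxK, hxU⟩ : x ∈ A)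
        exact this.2.symm
      · have hx : x = u := hBu x hxU hxS
        subst hx
        have : y ∈ N x := (hNeqA x hxU hxS) ▸ (⟨hyK, hyU⟩ : y ∈ A)
        exact this.2
      · exact absurd ((hBu x hxU hxS).trans (hBu y hyU hyS).symm) hxy
    · push_neg at hB
      have : U ⊆ K := fun x hx => (hKS x).resolve_right (hB x hx)
      exact hK.subset this
  obtain ⟨u, huU⟩ := hne
  have hNu : N u = U \ {u} := by
    apply Set.Subset.antisymm
    · rintro x ⟨hxU, hadj⟩
      exact ⟨hxU, fun h => hadj.ne' (Set.mem_singleton_iff.mp h)⟩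
    · rintro x ⟨hxU, hxu⟩
      exact ⟨hxU, hclique huU hxU (fun h => hxu (h ▸ rfl))⟩
  have hcard : U.ncard = d + 1 := by
    rw [← hreg u huU, show {w ∈ U | G.Adj u w} = U \ {u} from hNu]
    exact (Set.ncard_diff_singleton_add_one huU (Set.toFinite U)).symm
  refine ⟨?_, hclique, hcard⟩
  rw [SimpleGraph.connected_iff]
  constructor
  · rintro ⟨a, ha⟩ ⟨b, hb⟩
    by_cases hab : a = b
    · subst hab
      rfl
    · exact SimpleGraph.Adj.reachable (by exact hclique ha hb hab)
  · exact ⟨⟨u, huU⟩⟩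
end
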